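/- arXiv:2009.08853 — 6 statements merged into one kernel-verified Lean document; each statement's English description precedes it below -/
import Mathlib

section
/- Let n ≥ 2 and let P₁ and P₂ be real polynomials of degree n, having n distinct real roots t_{1,1} < t_{1,2} < ⋯ < t_{1,n} and t_{2,1} < t_{2,2} < ⋯ < t_{2,n}, respectively. Assume the roots interlace in the sense t_{1,1} ≤ t_{2,1} < t_{1,2} ≤ t_{2,2} < ⋯ < t_{1,n} ≤ t_{2,n}, where at least one of the inequalities t_{1,i} ≤ t_{2,i} is strict. Then, listing the real roots v_{1,1} ≤ ⋯ ≤ v_{1,n−1} of P₁′ and v_{2,1} ≤ ⋯ ≤ v_{2,n−1} of P₂′, these roots strictly interlace: v_{1,1} < v_{2,1} < v_{1,2} < v_{2,2} < ⋯ < v_{1,n−1} < v_{2,n−1}. -/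
open Finset Polynomial

/-!
At a point `x` that is not a root, `P = c ∏ᵢ (X - tᵢ)` satisfies `P'(x) = P(x) ∑ᵢ (x - tᵢ)⁻¹`, and
this sum is strictly decreasing on every gap `(tₖ, tₖ₊₁)`. By Rolle, `P'` has a root `vₖ` in each
gap; these `n - 1` points are all of its roots, so `vₖ` is the unique zero of the sum in its gap.
Moving a root `tᵢ` to the right increases `(x - tᵢ)⁻¹` as long as `x - tᵢ` keeps its sign.
Comparing the sums of `t₁` and `t₂` at `v₁ₖ`, and the sums of `(t₂ᵢ)` and `(t₁,ᵢ₊₁)` at `v₂ₖ`,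
therefore puts `v₁ₖ` to the left of `v₂ₖ` and `v₂ₖ` to the left of `v₁,ₖ₊₁`.
-/

theorem inv_lt_inv_of_lt_of_pos_or_neg {a b : ℝ} (hab : a < b) (h : 0 < a ∨ b < 0) :
    b⁻¹ < a⁻¹ := by
  rcases h with h | h
  · exact (inv_lt_inv₀ (h.trans hab) h).2 hab
  · exact (inv_lt_inv_of_neg h (hab.trans h)).2 hab

theorem inv_sub_lt_inv_sub {a b x : ℝ} (hab : a < b) (hx : b < x ∨ x < a) :
    (x - a)⁻¹ < (x - b)⁻¹ :=
  inv_lt_inv_of_lt_of_pos_or_neg (by linarith) (hx.imp sub_pos.2 sub_neg.2)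

theorem inv_sub_le_inv_sub {a b x : ℝ} (hab : a ≤ b) (hx : b < x ∨ x < a) :
    (x - a)⁻¹ ≤ (x - b)⁻¹ := by
  rcases hab.eq_or_lt with rfl | hab
  · exact le_rfl
  · exact (inv_sub_lt_inv_sub hab hx).le

theorem MonotoneOn.le_or_le_of_mem_Icc {α : Type*} [Preorder α] {t : ℕ → α} {n k i : ℕ}
    (ht : MonotoneOn t (Set.Icc 1 n)) (hk : 1 ≤ k) (hkn : k < n) (hi : i ∈ Set.Icc 1 n) :
    t i ≤ t k ∨ t (k + 1) ≤ t i := by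
  rcases le_or_gt i k with h | h
  · exact .inl (ht hi ⟨hk, hkn.le⟩ h)
  · exact .inr (ht ⟨by omega, hkn⟩ hi h)

theorem MonotoneOn.strictMonoOn_of_mem_Ioo {t v : ℕ → ℝ} {n : ℕ}
    (ht : MonotoneOn t (Set.Icc 1 n))
    (hv : ∀ k ∈ Set.Icc 1 (n - 1), v k ∈ Set.Ioo (t k) (t (k + 1))) :
    StrictMonoOn v (Set.Icc 1 (n - 1)) := by
  intro k hk l hl hkl
  have := hl.2
  calc v k < t (k + 1) := (hv k hk).2
    _ ≤ t l := ht ⟨by omega, by omega⟩ ⟨by linarith [hk.1], by omega⟩ hkl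
    _ < v l := (hv l hl).1

/-- The logarithmic derivative of `∏ i ∈ [1, n], (X - t i)`. -/
noncomputable def rootLogDeriv (n : ℕ) (t : ℕ → ℝ) (x : ℝ) : ℝ :=
  ∑ i ∈ Finset.Icc 1 n, (x - t i)⁻¹

section RootLogDeriv

variable {n k : ℕ} {t t₁ t₂ : ℕ → ℝ}

theorem strictAntiOn_rootLogDeriv (ht : MonotoneOn t (Set.Icc 1 n)) (hk : 1 ≤ k) (hkn : k < n) :
    StrictAntiOn (rootLogDeriv n t) (Set.Ioo (t k) (t (k + 1))) := by
  intro x hx y hy hxy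
  refine sum_lt_sum_of_nonempty ⟨1, mem_Icc.2 ⟨le_rfl, by omega⟩⟩ fun i hi => ?_
  have hgap := ht.le_or_le_of_mem_Icc hk hkn (mem_Icc.1 hi)
  exact inv_lt_inv_of_lt_of_pos_or_neg (by linarith)
    (by rcases hgap with h | h <;> [left; right] <;> linarith [hx.1, hy.2])

theorem rootLogDeriv_lt_of_le (h₁ : MonotoneOn t₁ (Set.Icc 1 n))
    (h₂ : MonotoneOn t₂ (Set.Icc 1 n)) (hle : ∀ i ∈ Finset.Icc 1 n, t₁ i ≤ t₂ i)
    (hstrict : ∃ i ∈ Finset.Icc 1 n, t₁ i < t₂ i) (hk : 1 ≤ k) (hkn : k < n) {x : ℝ}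
    (hx₂ : t₂ k < x) (hx₁ : x < t₁ (k + 1)) :
    rootLogDeriv n t₁ x < rootLogDeriv n t₂ x := by
  have hsep : ∀ i ∈ Finset.Icc 1 n, t₂ i < x ∨ x < t₁ i := by
    intro i hi
    rcases le_or_gt i k with h | h
    · exact .inl ((h₂ (mem_Icc.1 hi) ⟨hk, hkn.le⟩ h).trans_lt hx₂)
    · exact .inr (hx₁.trans_le (h₁ ⟨by omega, hkn⟩ (mem_Icc.1 hi) h))
  obtain ⟨i₀, hi₀, hlt⟩ := hstrict
  exact sum_lt_sum (fun i hi => inv_sub_le_inv_sub (hle i hi) (hsep i hi))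
    ⟨i₀, hi₀, inv_sub_lt_inv_sub hlt (hsep i₀ hi₀)⟩

/-- Pairing `t₂ i` with `t₁ (i + 1)` leaves the unmatched terms `(x - t₁ 1)⁻¹ > 0` and
`(x - t₂ n)⁻¹ < 0`. -/
theorem rootLogDeriv_lt_of_le_succ (h₁ : MonotoneOn t₁ (Set.Icc 1 n))
    (h₂ : MonotoneOn t₂ (Set.Icc 1 n)) (hle : ∀ i, 1 ≤ i → i ≤ n - 1 → t₂ i ≤ t₁ (i + 1))
    {j : ℕ} (hj : j ∈ Set.Icc 1 n) {x : ℝ} (hx₁ : t₁ j < x) (hx₂ : x < t₂ j) :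
    rootLogDeriv n t₂ x < rootLogDeriv n t₁ x := by
  obtain ⟨m, rfl⟩ : ∃ m, n = m + 1 := ⟨n - 1, by have := hj.1; have := hj.2; omega⟩
  have hshift (t : ℕ → ℝ) :
      rootLogDeriv (m + 1) t x = ∑ i ∈ range (m + 1), (x - t (i + 1))⁻¹ := by
    rw [rootLogDeriv, range_eq_Ico, sum_Ico_add' (fun i => (x - t i)⁻¹),
      ← Ico_add_one_right_eq_Icc]
  have hmid : ∑ i ∈ range m, (x - t₂ (i + 1))⁻¹ ≤ ∑ i ∈ range m, (x - t₁ (i + 1 + 1))⁻¹ := by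
    refine sum_le_sum fun i hi => ?_
    simp only [mem_range] at hi
    refine inv_sub_le_inv_sub (hle (i + 1) (by omega) (by omega)) ?_
    rcases le_or_gt (i + 2) j with h | h
    · exact .inl ((h₁ ⟨by omega, by omega⟩ hj h).trans_lt hx₁)
    · exact .inr (hx₂.trans_le (h₂ hj ⟨by omega, by omega⟩ (by omega)))
  have hfirst : 0 < (x - t₁ 1)⁻¹ :=
    inv_pos.2 (sub_pos.2 ((h₁ ⟨le_rfl, by omega⟩ hj hj.1).trans_lt hx₁))
  have hlast : (x - t₂ (m + 1))⁻¹ < 0 :=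
    inv_lt_zero.2 (sub_neg.2 (hx₂.trans_le (h₂ hj ⟨by omega, le_rfl⟩ hj.2)))
  rw [hshift, hshift, sum_range_succ, sum_range_succ']
  linarith

theorem lt_of_rootLogDeriv_eq_zero_of_le (h₁ : MonotoneOn t₁ (Set.Icc 1 n))
    (h₂ : MonotoneOn t₂ (Set.Icc 1 n)) (hle : ∀ i ∈ Finset.Icc 1 n, t₁ i ≤ t₂ i)
    (hstrict : ∃ i ∈ Finset.Icc 1 n, t₁ i < t₂ i) (hk : 1 ≤ k) (hkn : k < n) {x y : ℝ}
    (hx : x ∈ Set.Ioo (t₁ k) (t₁ (k + 1))) (hy : y ∈ Set.Ioo (t₂ k) (t₂ (k + 1)))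
    (hx₀ : rootLogDeriv n t₁ x = 0) (hy₀ : rootLogDeriv n t₂ y = 0) : x < y := by
  rcases le_or_gt x (t₂ k) with hxk | hxk
  · exact hxk.trans_lt hy.1
  have hx' : x ∈ Set.Ioo (t₂ k) (t₂ (k + 1)) :=
    ⟨hxk, hx.2.trans_le (hle (k + 1) (mem_Icc.2 ⟨by omega, hkn⟩))⟩
  have hpos := rootLogDeriv_lt_of_le h₁ h₂ hle hstrict hk hkn hxk hx.2
  exact ((strictAntiOn_rootLogDeriv h₂ hk hkn).lt_iff_gt hy hx').1 (by linarith)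

theorem lt_of_rootLogDeriv_eq_zero_of_le_succ (h₁ : MonotoneOn t₁ (Set.Icc 1 n))
    (h₂ : MonotoneOn t₂ (Set.Icc 1 n)) (hle : ∀ i, 1 ≤ i → i ≤ n - 1 → t₂ i ≤ t₁ (i + 1))
    (hk : 1 ≤ k) (hkn : k + 1 < n) {x y : ℝ}
    (hx : x ∈ Set.Ioo (t₂ k) (t₂ (k + 1))) (hy : y ∈ Set.Ioo (t₁ (k + 1)) (t₁ (k + 2)))
    (hx₀ : rootLogDeriv n t₂ x = 0) (hy₀ : rootLogDeriv n t₁ y = 0) : x < y := by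
  rcases le_or_gt x (t₁ (k + 1)) with hxk | hxk
  · exact hxk.trans_lt hy.1
  have hx' : x ∈ Set.Ioo (t₁ (k + 1)) (t₁ (k + 2)) :=
    ⟨hxk, hx.2.trans_le (hle (k + 1) (by omega) (by omega))⟩
  have hpos := rootLogDeriv_lt_of_le_succ h₁ h₂ hle ⟨by omega, hkn.le⟩ hxk hx.2
  exact ((strictAntiOn_rootLogDeriv h₁ (by omega) hkn).lt_iff_gt hy hx').1 (by linarith)

end RootLogDeriv

theorem Polynomial.roots_eq_val_of_natDegree_le_card {R : Type*} [CommRing R] [IsDomain R]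
    {p : R[X]} (hp : p ≠ 0) {s : Finset R} (hs : ∀ a ∈ s, p.IsRoot a)
    (hcard : p.natDegree ≤ #s) : p.roots = s.val := by
  have hle : s.val ≤ p.roots :=
    (Multiset.le_iff_subset s.nodup).2 fun a ha => (mem_roots hp).2 (hs a ha)
  exact (Multiset.eq_of_le_of_card_le hle ((card_roots' p).trans hcard)).symm

theorem card_image_Icc_one {α : Type*} [DecidableEq α] {t : ℕ → α} {n : ℕ}
    (ht : Set.InjOn t (Set.Icc 1 n)) : #((Finset.Icc 1 n).image t) = n := by
  rw [card_image_of_injOn (by rwa [coe_Icc]), Nat.card_Icc, Nat.add_sub_cancel]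

section RealRoots

variable {n : ℕ} {t : ℕ → ℝ} {P : ℝ[X]}

theorem exists_isRoot_derivative_mem_Ioo {a b : ℝ} (hab : a < b) (ha : P.IsRoot a)
    (hb : P.IsRoot b) : ∃ w ∈ Set.Ioo a b, P.derivative.IsRoot w := by
  obtain ⟨w, hw, hw₀⟩ := exists_deriv_eq_zero hab P.continuousOn (ha.trans hb.symm)
  exact ⟨w, hw, by rwa [IsRoot, ← P.deriv]⟩

theorem roots_eq_image_Icc (hP : P ≠ 0) (hdeg : P.natDegree ≤ n) (ht : Set.InjOn t (Set.Icc 1 n))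
    (hroot : ∀ i ∈ Finset.Icc 1 n, P.IsRoot (t i)) :
    P.roots = ((Finset.Icc 1 n).image t).val :=
  roots_eq_val_of_natDegree_le_card hP
    (Finset.forall_mem_image.2 hroot) (by rwa [card_image_Icc_one ht])

theorem eval_derivative_eq_eval_mul_rootLogDeriv (hdeg : P.natDegree ≤ n)
    (ht : Set.InjOn t (Set.Icc 1 n)) (hroot : ∀ i ∈ Finset.Icc 1 n, P.IsRoot (t i)) {x : ℝ}
    (hx : P.eval x ≠ 0) : P.derivative.eval x = P.eval x * rootLogDeriv n t x := by
  have hP : P ≠ 0 := by rintro rfl; simp at hx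
  have hroots := roots_eq_image_Icc hP hdeg ht hroot
  have hsplits : P.Splits := splits_iff_card_roots.2 <| le_antisymm (card_roots' P) <| by
    rw [hroots, Finset.card_val, card_image_Icc_one ht]; exact hdeg
  rw [hsplits.eval_derivative_eq_eval_mul_sum hx, hroots, ← Finset.sum_eq_multiset_sum,
    sum_image (by rwa [coe_Icc])]
  simp only [one_div, rootLogDeriv]

theorem eval_ne_zero_of_mem_Ioo (hP : P ≠ 0) (hdeg : P.natDegree ≤ n)
    (ht : StrictMonoOn t (Set.Icc 1 n)) (hroot : ∀ i ∈ Finset.Icc 1 n, P.IsRoot (t i)) {k : ℕ}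
    (hk : 1 ≤ k) (hkn : k < n) {x : ℝ} (hx : x ∈ Set.Ioo (t k) (t (k + 1))) : P.eval x ≠ 0 := by
  intro hx₀
  have hmem : x ∈ P.roots := (mem_roots hP).2 hx₀
  rw [roots_eq_image_Icc hP hdeg ht.injOn hroot] at hmem
  obtain ⟨i, hi, rfl⟩ : ∃ i ∈ Finset.Icc 1 n, t i = x := Finset.mem_image.1 hmem
  rcases ht.monotoneOn.le_or_le_of_mem_Icc hk hkn (mem_Icc.1 hi) with h | h
  · linarith [hx.1]
  · linarith [hx.2]

theorem exists_roots_derivative (hn : 0 < n) (hdeg : P.natDegree = n)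
    (ht : StrictMonoOn t (Set.Icc 1 n)) (hroot : ∀ i ∈ Finset.Icc 1 n, P.IsRoot (t i)) :
    ∃ v : ℕ → ℝ, StrictMonoOn v (Set.Icc 1 (n - 1)) ∧
      (∀ k ∈ Set.Icc 1 (n - 1), v k ∈ Set.Ioo (t k) (t (k + 1)) ∧ rootLogDeriv n t (v k) = 0) ∧
      ∀ x, P.derivative.eval x = 0 ↔ ∃ k ∈ Finset.Icc 1 (n - 1), x = v k := by
  have hP : P ≠ 0 := by rintro rfl; simp at hdeg; omega
  have hP' : P.derivative ≠ 0 := by rw [Ne, derivative_eq_zero]; omega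
  have hrolle : ∀ k, ∃ w, k ∈ Set.Icc 1 (n - 1) →
      w ∈ Set.Ioo (t k) (t (k + 1)) ∧ P.derivative.IsRoot w := by
    intro k
    by_cases hk : k ∈ Set.Icc 1 (n - 1)
    · have hk' := hk.2
      obtain ⟨w, hw, hw₀⟩ := exists_isRoot_derivative_mem_Ioo
        (ht ⟨hk.1, by omega⟩ ⟨by omega, by omega⟩ (Nat.lt_succ_self k))
        (hroot k (mem_Icc.2 ⟨hk.1, by omega⟩)) (hroot (k + 1) (mem_Icc.2 ⟨by omega, by omega⟩))
      exact ⟨w, fun _ => ⟨hw, hw₀⟩⟩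
    · exact ⟨0, fun h => absurd h hk⟩
  choose v hv using hrolle
  have hvmono := ht.monotoneOn.strictMonoOn_of_mem_Ioo fun k hk => (hv k hk).1
  have hroots' : P.derivative.roots = ((Finset.Icc 1 (n - 1)).image v).val := by
    refine roots_eq_image_Icc hP' ?_ hvmono.injOn fun k hk => (hv k (mem_Icc.1 hk)).2
    have := natDegree_derivative_le P
    omega
  refine ⟨v, hvmono, fun k hk => ⟨(hv k hk).1, ?_⟩, fun x => ?_⟩
  · have hk' := hk.2
    have hne := eval_ne_zero_of_mem_Ioo hP hdeg.le ht hroot hk.1 (by omega) (hv k hk).1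
    have h := eval_derivative_eq_eval_mul_rootLogDeriv hdeg.le ht.injOn hroot hne
    rw [(hv k hk).2, zero_eq_mul] at h
    exact h.resolve_left hne
  · rw [← IsRoot.def, ← mem_roots hP', hroots', Finset.mem_val, Finset.mem_image]
    simp only [eq_comm]

end RealRoots

/-- **Lemma (Sahm / Dette–Melas–Shpilev).** If two real polynomials of degree `n ≥ 2` have
`n` distinct real roots each, which interlace (with at least one strict inequality
`t₁ᵢ < t₂ᵢ`), then the `n − 1` real roots of their derivatives strictly interlace. -/
theorem stmt_0 (n : ℕ) (hn : 2 ≤ n) (P₁ P₂ : Polynomial ℝ) (t₁ t₂ : ℕ → ℝ)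
    (hdeg₁ : P₁.natDegree = n) (hdeg₂ : P₂.natDegree = n)
    (ht₁ : ∀ i j, 1 ≤ i → i < j → j ≤ n → t₁ i < t₁ j)
    (ht₂ : ∀ i j, 1 ≤ i → i < j → j ≤ n → t₂ i < t₂ j)
    (hroot₁ : ∀ x : ℝ, P₁.eval x = 0 ↔ ∃ i ∈ Finset.Icc 1 n, x = t₁ i)
    (hroot₂ : ∀ x : ℝ, P₂.eval x = 0 ↔ ∃ i ∈ Finset.Icc 1 n, x = t₂ i)
    (hle : ∀ i ∈ Finset.Icc 1 n, t₁ i ≤ t₂ i)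
    (hlt : ∀ i, 1 ≤ i → i ≤ n - 1 → t₂ i < t₁ (i + 1))
    (hstrict : ∃ i ∈ Finset.Icc 1 n, t₁ i < t₂ i) :
    ∃ v₁ v₂ : ℕ → ℝ,
      (∀ k l, 1 ≤ k → k ≤ l → l ≤ n - 1 → v₁ k ≤ v₁ l) ∧
      (∀ k l, 1 ≤ k → k ≤ l → l ≤ n - 1 → v₂ k ≤ v₂ l) ∧
      (∀ x : ℝ, (Polynomial.derivative P₁).eval x = 0 ↔
        ∃ k ∈ Finset.Icc 1 (n - 1), x = v₁ k) ∧
      (∀ x : ℝ, (Polynomial.derivative P₂).eval x = 0 ↔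
        ∃ k ∈ Finset.Icc 1 (n - 1), x = v₂ k) ∧
      (∀ k ∈ Finset.Icc 1 (n - 1), v₁ k < v₂ k) ∧
      (∀ k, 1 ≤ k → k ≤ n - 2 → v₂ k < v₁ (k + 1)) := by
  have hm₁ : StrictMonoOn t₁ (Set.Icc 1 n) := fun i hi j hj hij => ht₁ i j hi.1 hij hj.2
  have hm₂ : StrictMonoOn t₂ (Set.Icc 1 n) := fun i hi j hj hij => ht₂ i j hi.1 hij hj.2
  obtain ⟨v₁, hmono₁, hv₁, hderiv₁⟩ :=
    exists_roots_derivative (by omega) hdeg₁ hm₁ fun i hi => (hroot₁ _).2 ⟨i, hi, rfl⟩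
  obtain ⟨v₂, hmono₂, hv₂, hderiv₂⟩ :=
    exists_roots_derivative (by omega) hdeg₂ hm₂ fun i hi => (hroot₂ _).2 ⟨i, hi, rfl⟩
  refine ⟨v₁, v₂, fun k l hk hkl hl => hmono₁.monotoneOn ⟨hk, by omega⟩ ⟨by omega, hl⟩ hkl,
    fun k l hk hkl hl => hmono₂.monotoneOn ⟨hk, by omega⟩ ⟨by omega, hl⟩ hkl, hderiv₁, hderiv₂,
    fun k hk => ?_, fun k hk hkn => ?_⟩
  · obtain ⟨hk₁, hkn⟩ := mem_Icc.1 hk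
    obtain ⟨hx, hx₀⟩ := hv₁ k ⟨hk₁, hkn⟩
    obtain ⟨hy, hy₀⟩ := hv₂ k ⟨hk₁, hkn⟩
    exact lt_of_rootLogDeriv_eq_zero_of_le hm₁.monotoneOn hm₂.monotoneOn hle hstrict hk₁
      (by omega) hx hy hx₀ hy₀
  · obtain ⟨hx, hx₀⟩ := hv₂ k ⟨hk, by omega⟩
    obtain ⟨hy, hy₀⟩ := hv₁ (k + 1) ⟨by omega, by omega⟩
    exact lt_of_rootLogDeriv_eq_zero_of_le_succ hm₁.monotoneOn hm₂.monotoneOn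
      (fun i hi hin => (hlt i hi hin).le) hk (by omega) hx hy hx₀ hy₀
end

section
/- For every integer n ≥ 2 and every real a > 0, the set of points x ∈ [0,a] with |S_n(x)| = 1 is exactly {s_1, s_2, …, s_n}; that is, S_n has exactly n extremal points on [0,a], namely the points s_1 < s_2 < ⋯ < s_n. -/
open Real

/-- `S_n(x) = T_n((x/a)(1 + cos(π/(2n))) − cos(π/(2n)))`, where `T_n` is the `n`-th
Chebyshev polynomial of the first kind. -/
noncomputable def chebS (n : ℕ) (a x : ℝ) : ℝ :=
  (Polynomial.Chebyshev.T ℝ (n : ℤ)).eval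
    ((x / a) * (1 + Real.cos (π / (2 * n))) - Real.cos (π / (2 * n)))

/-- The Chebyshev-type points `s_i = a (cos((n−i)π/n) + cos(π/(2n))) / (1 + cos(π/(2n)))`,
`i = 1, …, n`. -/
noncomputable def chebPt (n : ℕ) (a : ℝ) (i : ℕ) : ℝ :=
  a * (Real.cos (((n : ℝ) - (i : ℝ)) * π / n) + Real.cos (π / (2 * n))) /
    (1 + Real.cos (π / (2 * n)))

/-! The affine change of variables `y = (x/a)(1 + c) - c`, `c = cos(π/(2n))`, maps `[0, a]`
onto `[-c, 1] ⊆ (-1, 1]`. On `[-1, 1]` the points where `|T_n| = 1` are `cos(kπ/n)`,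
`0 ≤ k ≤ n`; the left end `-c` cuts off exactly `k = n`, and `s_i` is the preimage of
`cos((n - i)π/n)`. -/

noncomputable def chebArg (n : ℕ) (a x : ℝ) : ℝ :=
  x / a * (1 + cos (π / (2 * n))) - cos (π / (2 * n))

lemma chebS_eq_eval_chebArg (n : ℕ) (a x : ℝ) :
    chebS n a x = (Polynomial.Chebyshev.T ℝ n).eval (chebArg n a x) :=
  rfl

lemma cos_pi_div_two_mul_nonneg (n : ℕ) : 0 ≤ cos (π / (2 * n)) := by
  rcases Nat.eq_zero_or_pos n with rfl | hn
  · simp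
  have : 0 ≤ π / (2 * n) := by positivity
  refine cos_nonneg_of_mem_Icc ⟨by linarith [pi_pos], ?_⟩
  exact div_le_div_of_nonneg_left pi_pos.le two_pos (by norm_cast; omega)

lemma cos_pi_div_two_mul_lt_one {n : ℕ} (hn : n ≠ 0) : cos (π / (2 * n)) < 1 := by
  have hpos : 0 < π / (2 * n) := by positivity
  have hle : π / (2 * n) ≤ π := div_le_self pi_pos.le (by norm_cast; omega)
  simpa using cos_lt_cos_of_nonneg_of_le_pi le_rfl hle hpos

lemma eq_chebPt_iff (n : ℕ) {a : ℝ} (ha : a ≠ 0) (x : ℝ) (i : ℕ) :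
    x = chebPt n a i ↔ chebArg n a x = cos (((n : ℝ) - i) * π / n) := by
  have hc : 1 + cos (π / (2 * n)) ≠ 0 := by linarith [cos_pi_div_two_mul_nonneg n]
  rw [chebPt, chebArg, eq_div_iff hc, sub_eq_iff_eq_add, div_mul_eq_mul_div, div_eq_iff ha]
  constructor <;> intro h <;> linarith

lemma chebArg_ne_cos_pi {n : ℕ} (hn : n ≠ 0) {a x : ℝ} (ha : 0 < a) (hx : 0 ≤ x) :
    chebArg n a x ≠ cos (n * π / n) := by
  have hc := cos_pi_div_two_mul_lt_one hn
  have : 0 ≤ x / a * (1 + cos (π / (2 * n))) := by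
    have := cos_pi_div_two_mul_nonneg n
    positivity
  rw [chebArg, mul_div_cancel_left₀ _ (by exact_mod_cast hn), cos_pi]
  linarith

lemma chebPt_lt_chebPt {n : ℕ} (hn : n ≠ 0) {a : ℝ} (ha : 0 < a) {i j : ℕ} (hij : i < j)
    (hjn : j ≤ n) : chebPt n a i < chebPt n a j := by
  have hN : (0 : ℝ) < n := by positivity
  have hij' : (i : ℝ) < j := by exact_mod_cast hij
  have hjn' : (j : ℝ) ≤ n := by exact_mod_cast hjn
  have mem_Icc {m : ℕ} (hm : (m : ℝ) ≤ n) : ((n : ℝ) - m) * π / n ∈ Set.Icc 0 π := by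
    constructor
    · have : (0 : ℝ) ≤ n - m := by linarith
      positivity
    · rw [div_le_iff₀ hN]
      nlinarith [pi_pos, (Nat.cast_nonneg m : (0 : ℝ) ≤ m)]
  have hcos : cos (((n : ℝ) - i) * π / n) < cos (((n : ℝ) - j) * π / n) :=
    strictAntiOn_cos (mem_Icc hjn') (mem_Icc (by linarith)) (by gcongr)
  have hc : 0 < 1 + cos (π / (2 * n)) := by linarith [cos_pi_div_two_mul_nonneg n]
  unfold chebPt
  gcongr

lemma exists_le_iff_exists_sub {n : ℕ} {P : ℝ → Prop} (hPn : ¬ P n) :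
    (∃ k ≤ n, P k) ↔ ∃ i, 1 ≤ i ∧ i ≤ n ∧ P ((n : ℝ) - i) := by
  constructor
  · rintro ⟨k, hkn, hPk⟩
    have hk : k ≠ n := by rintro rfl; exact hPn hPk
    refine ⟨n - k, by omega, by omega, ?_⟩
    rwa [Nat.cast_sub hkn, sub_sub_cancel]
  · rintro ⟨i, -, hin, hPi⟩
    exact ⟨n - i, by omega, by rwa [Nat.cast_sub hin]⟩

/-- For `n ≥ 2` and `a > 0`, the set of `x ∈ [0, a]` with `|S_n(x)| = 1` is exactly
`{s_1, …, s_n}`, and the points `s_1 < s_2 < ⋯ < s_n` are strictly increasing. -/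
theorem stmt_3 (n : ℕ) (hn : 2 ≤ n) (a : ℝ) (ha : 0 < a) :
    (∀ x ∈ Set.Icc (0 : ℝ) a,
      (|chebS n a x| = 1 ↔ ∃ i, 1 ≤ i ∧ i ≤ n ∧ x = chebPt n a i)) ∧
    (∀ i j, 1 ≤ i → i < j → j ≤ n → chebPt n a i < chebPt n a j) := by
  have hn0 : n ≠ 0 := by omega
  refine ⟨fun x hx => ?_, fun i j _ hij hjn => chebPt_lt_chebPt hn0 ha hij hjn⟩
  rw [chebS_eq_eval_chebArg, Polynomial.Chebyshev.abs_eval_T_real_eq_one_iff hn0]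
  simp_rw [eq_chebPt_iff n ha.ne' x]
  exact exists_le_iff_exists_sub (P := fun t => chebArg n a x = cos (t * π / n))
    (chebArg_ne_cos_pi hn0 ha hx.1)
end

section
/- Let n ≥ 2 and let 0 < s_1 < s_2 < ⋯ < s_n be real numbers. For each i let ω_{i,1} < ⋯ < ω_{i,n−1} denote the n−1 distinct real roots of L̄_i′. Then for every i ∈ {1,…,n−1} the roots of L̄_{i+1}′ and L̄_i′ strictly interlace: ω_{i+1,1} < ω_{i,1} < ω_{i+1,2} < ω_{i,2} < ⋯ < ω_{i+1,n−1} < ω_{i,n−1}. Consequently the full chain ω_{n,1} < ω_{n−1,1} < ⋯ < ω_{1,1} < ω_{n,2} < ⋯ < ω_{1,2} < ⋯ < ω_{n,n−1} < ⋯ < ω_{1,n−1} holds. -/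
open Finset

/-- The Lagrange basis polynomials without intercept for nodes `s_1, …, s_n`:
`L̄_i(z) = z ∏_{j≠i}(z − s_j) / (s_i ∏_{j≠i}(s_i − s_j))`. -/
noncomputable def Lbar (n : ℕ) (s : ℕ → ℝ) (i : ℕ) (z : ℝ) : ℝ :=
  (z * ∏ j ∈ (Finset.Icc 1 n).erase i, (z - s j)) /
    (s i * ∏ j ∈ (Finset.Icc 1 n).erase i, (s i - s j))

/-!
The zeros of `L̄_q` are `0` and the nodes `s_j`, `j ≠ q`, so by Rolle `L̄_q′` vanishes in each of
the `n − 1` gaps between consecutive zeros; since `L̄_q′` has only `n − 1` zeros, `ω_{q,k}` is the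
one in the `k`-th gap. There it is the zero of the logarithmic derivative
`H_q(x) = 1/x + ∑_{j ≠ q} 1/(x − s_j)`, which strictly decreases on each gap, so a point `x` of
that gap lies to the right of `ω_{q,k}` iff `H_q(x) < 0`. For `x = ω_{p,k}` we have `H_p(x) = 0`,
hence `H_q(x) = 1/(x − s_p) − 1/(x − s_q)`, whose sign only depends on whether `x` lies between
`s_p` and `s_q`; comparing the positions of the gaps of `L̄_p` and `L̄_q` gives the interlacing.
-/

theorem inv_lt_inv_of_zero_notMem_Icc {K : Type*} [Field K] [LinearOrder K]
    [IsStrictOrderedRing K] {u v : K} (huv : u < v) (h0 : (0 : K) ∉ Set.Icc u v) :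
    v⁻¹ < u⁻¹ := by
  rcases lt_or_ge 0 u with hu | hu
  · exact (inv_lt_inv₀ (hu.trans huv) hu).2 huv
  · have hv : v < 0 := lt_of_not_ge fun hv => h0 ⟨hu, hv⟩
    exact (inv_lt_inv_of_neg hv (huv.trans hv)).2 huv

namespace StrictMonoOn

variable {α : Type*} [Preorder α] {r : ℕ → α} {N m k : ℕ} {x : α}

theorem le_of_apply_le_of_mem_Ioo (hr : StrictMonoOn r (Set.Iic N)) (hm : m ≤ N)
    (hk : k + 1 ≤ N) (hx : x ∈ Set.Ioo (r k) (r (k + 1))) (h : r m ≤ x) : m ≤ k := by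
  by_contra! hkm
  exact (hx.2.trans_le (hr.monotoneOn hk hm hkm)).not_ge h

theorem lt_of_le_apply_of_mem_Ioo (hr : StrictMonoOn r (Set.Iic N)) (hm : m ≤ N)
    (hk : k + 1 ≤ N) (hx : x ∈ Set.Ioo (r k) (r (k + 1))) (h : x ≤ r m) : k < m := by
  by_contra! hmk
  exact (h.trans (hr.monotoneOn hm (Set.mem_Iic.2 (by omega)) hmk)).not_gt hx.1

theorem apply_notMem_Ioo (hr : StrictMonoOn r (Set.Iic N)) (hm : m ≤ N) (hk : k + 1 ≤ N) :
    r m ∉ Set.Ioo (r k) (r (k + 1)) := fun hx =>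
  (hr.lt_of_le_apply_of_mem_Ioo hm hk hx le_rfl).not_ge
    (hr.le_of_apply_le_of_mem_Ioo hm hk hx le_rfl)

end StrictMonoOn

theorem critPoint_mem_Ioo_zeros {f : ℝ → ℝ} {N : ℕ} {r ω : ℕ → ℝ} (hf : Continuous f)
    (hr : StrictMonoOn r (Set.Iic N)) (hfr : ∀ m ≤ N, f (r m) = 0)
    (hω : StrictMonoOn ω (Set.Icc 1 N))
    (hcrit : ∀ x, deriv f x = 0 → ∃ k ∈ Finset.Icc 1 N, x = ω k) {k : ℕ} (hk : k < N) :
    ω (k + 1) ∈ Set.Ioo (r k) (r (k + 1)) := by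
  have hrolle (i : Fin N) : ∃ c ∈ Set.Ioo (r i) (r (i + 1)), deriv f c = 0 :=
    exists_deriv_eq_zero
      (hr (Set.mem_Iic.2 (by omega)) (Set.mem_Iic.2 (by omega)) (Nat.lt_succ_self _))
      hf.continuousOn (by rw [hfr _ (by omega), hfr _ (by omega)])
  choose c hc hc0 using hrolle
  have hc_mono : StrictMono c := fun i j hij =>
    calc c i < r (i + 1) := (hc i).2
      _ ≤ r j := hr.monotoneOn (Set.mem_Iic.2 (by omega)) (Set.mem_Iic.2 (by omega)) hij
      _ < c j := (hc j).1
  have hω_mono : StrictMono fun i : Fin N => ω (i + 1) := fun i j hij =>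
    hω ⟨by omega, by omega⟩ ⟨by omega, by omega⟩ (by simpa using hij)
  -- the Rolle points are `N` increasing critical points, hence exactly the enumeration `ω`
  let Z := (Finset.Icc 1 N).image ω
  have hZ : Z.card = N := by
    rw [card_image_of_injOn (by simpa using hω.injOn), Nat.card_Icc, Nat.add_sub_cancel]
  have hcZ (i : Fin N) : c i ∈ Z := by
    obtain ⟨m, hm, hcm⟩ := hcrit _ (hc0 i)
    exact hcm ▸ mem_image_of_mem ω hm
  have hωZ (i : Fin N) : ω (i + 1) ∈ Z := mem_image_of_mem ω (mem_Icc.2 ⟨by omega, by omega⟩)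
  have hcω : c = fun i : Fin N => ω (i + 1) :=
    (orderEmbOfFin_unique hZ hcZ hc_mono).trans (orderEmbOfFin_unique hZ hωZ hω_mono).symm
  simpa [hcω] using hc ⟨k, hk⟩

section Lbar

variable {n : ℕ} {s : ℕ → ℝ}

/-- The zeros of `L̄_q` in increasing order, `m = 0, …, n - 1`: `0`, then the nodes `s j`,
`j ≠ q`. -/
def lbarNode (s : ℕ → ℝ) (q m : ℕ) : ℝ :=
  if m = 0 then 0 else s (if m < q then m else m + 1)

def lbarGap (s : ℕ → ℝ) (q k : ℕ) : Set ℝ :=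
  Set.Ioo (lbarNode s q k) (lbarNode s q (k + 1))

theorem lbarNode_congr {p q m : ℕ} (h : m < p ↔ m < q) : lbarNode s p m = lbarNode s q m := by
  simp [lbarNode, h]

theorem lbarNode_of_lt {q m : ℕ} (hm : m ≠ 0) (h : m < q) : lbarNode s q m = s m := by
  simp [lbarNode, hm, h]

theorem lbarNode_of_le {q m : ℕ} (hm : m ≠ 0) (h : q ≤ m) : lbarNode s q m = s (m + 1) := by
  simp [lbarNode, hm, not_lt.2 h]

theorem lbarNode_strictMonoOn (hpos : ∀ i ∈ Finset.Icc 1 n, 0 < s i)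
    (hs : StrictMonoOn s (Set.Icc 1 n)) (q : ℕ) :
    StrictMonoOn (lbarNode s q) (Set.Iic (n - 1)) := by
  intro m hm m' hm' hmm'
  simp only [Set.mem_Iic] at hm hm'
  unfold lbarNode
  split_ifs <;> first
    | contradiction
    | exact le_rfl
    | omega
    | exact hpos _ (mem_Icc.2 ⟨by omega, by omega⟩)
    | exact hs ⟨by omega, by omega⟩ ⟨by omega, by omega⟩ (by omega)

theorem lbarNode_le_of_lt (hs : StrictMonoOn s (Set.Icc 1 n)) {p q m : ℕ} (hpq : p < q)
    (hm : m ≤ n - 1) : lbarNode s q m ≤ lbarNode s p m := by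
  unfold lbarNode
  split_ifs <;> first
    | exact le_rfl
    | omega
    | exact (hs ⟨by omega, by omega⟩ ⟨by omega, by omega⟩ (by omega)).le

theorem lbarNode_le_succ (hpos : ∀ i ∈ Finset.Icc 1 n, 0 < s i)
    (hs : StrictMonoOn s (Set.Icc 1 n)) (p q : ℕ) {m : ℕ} (hm : m + 1 ≤ n - 1) :
    lbarNode s p m ≤ lbarNode s q (m + 1) := by
  unfold lbarNode
  split_ifs <;> first
    | contradiction
    | exact le_rfl
    | omega
    | exact (hpos _ (mem_Icc.2 ⟨by omega, by omega⟩)).le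
    | exact hs.monotoneOn ⟨by omega, by omega⟩ ⟨by omega, by omega⟩ (by omega)

theorem Lbar_lbarNode (q : ℕ) {m : ℕ} (hm : m ≤ n - 1) : Lbar n s q (lbarNode s q m) = 0 := by
  have hnode (j : ℕ) (hj : j ∈ (Finset.Icc 1 n).erase q) : Lbar n s q (s j) = 0 :=
    div_eq_zero_iff.2 (.inl (mul_eq_zero_of_right _ (prod_eq_zero hj (sub_self _))))
  unfold lbarNode
  split_ifs with hm0 hmq
  · simp [Lbar]
  · exact hnode m (mem_erase.2 ⟨by omega, mem_Icc.2 ⟨by omega, by omega⟩⟩)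
  · exact hnode (m + 1) (mem_erase.2 ⟨by omega, mem_Icc.2 ⟨by omega, by omega⟩⟩)

theorem exists_lbarNode_eq {q j : ℕ} (hq : q ∈ Finset.Icc 1 n)
    (hj : j ∈ (Finset.Icc 1 n).erase q) : ∃ m ≤ n - 1, lbarNode s q m = s j := by
  simp only [mem_erase, mem_Icc] at hq hj
  rcases lt_or_gt_of_ne hj.1 with hjq | hjq
  · exact ⟨j, by omega, lbarNode_of_lt (by omega) hjq⟩
  · exact ⟨j - 1, by omega, by rw [lbarNode_of_le (by omega) (by omega)]; congr; omega⟩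

section Gap

variable (hpos : ∀ i ∈ Finset.Icc 1 n, 0 < s i) (hs : StrictMonoOn s (Set.Icc 1 n))
include hpos hs

theorem zero_notMem_lbarGap (q : ℕ) {k : ℕ} (hk : k + 1 ≤ n - 1) : 0 ∉ lbarGap s q k :=
  (lbarNode_strictMonoOn hpos hs q).apply_notMem_Ioo (m := 0) (Nat.zero_le _) hk

theorem node_notMem_lbarGap {q j k : ℕ} (hq : q ∈ Finset.Icc 1 n)
    (hj : j ∈ (Finset.Icc 1 n).erase q) (hk : k + 1 ≤ n - 1) : s j ∉ lbarGap s q k := by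
  obtain ⟨m, hm, hmj⟩ := exists_lbarNode_eq (s := s) hq hj
  rw [← hmj]
  exact (lbarNode_strictMonoOn hpos hs q).apply_notMem_Ioo hm hk

noncomputable def lbarLogDeriv (n : ℕ) (s : ℕ → ℝ) (q : ℕ) (x : ℝ) : ℝ :=
  x⁻¹ + ∑ j ∈ (Finset.Icc 1 n).erase q, (x - s j)⁻¹

theorem logDeriv_Lbar {q : ℕ} (hq : q ∈ Finset.Icc 1 n) {x : ℝ} (hx0 : x ≠ 0)
    (hxs : ∀ j ∈ (Finset.Icc 1 n).erase q, x ≠ s j) :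
    logDeriv (Lbar n s q) x = lbarLogDeriv n s q x := by
  set c := s q * ∏ j ∈ (Finset.Icc 1 n).erase q, (s q - s j)
  have hc : c ≠ 0 := by
    refine mul_ne_zero (hpos q hq).ne' (prod_ne_zero_iff.2 fun j hj => sub_ne_zero.2 ?_)
    simp only [mem_erase, mem_Icc] at hq hj
    rcases lt_or_gt_of_ne hj.1 with hjq | hjq
    · exact (hs ⟨hj.2.1, by omega⟩ ⟨hq.1, hq.2⟩ hjq).ne'
    · exact (hs ⟨hq.1, hq.2⟩ ⟨by omega, hj.2.2⟩ hjq).ne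
  have hsub : ∀ j ∈ (Finset.Icc 1 n).erase q, x - s j ≠ 0 := fun j hj => sub_ne_zero.2 (hxs j hj)
  have hLbar : Lbar n s q = fun z => (z * ∏ j ∈ (Finset.Icc 1 n).erase q, (z - s j)) * c⁻¹ := by
    funext z
    rw [Lbar, div_eq_mul_inv]
  rw [hLbar, logDeriv_mul_const _ _ (inv_ne_zero hc),
    logDeriv_mul (f := fun z => z) x hx0 (prod_ne_zero_iff.2 hsub) differentiableAt_id
      (by fun_prop), logDeriv_prod hsub (fun j _ => by fun_prop)]
  simp [logDeriv_apply, lbarLogDeriv]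

theorem lbarLogDeriv_strictAntiOn {q k : ℕ} (hq : q ∈ Finset.Icc 1 n) (hk : k + 1 ≤ n - 1) :
    StrictAntiOn (lbarLogDeriv n s q) (lbarGap s q k) := by
  intro x hx y hy hxy
  have hI : Set.Icc x y ⊆ lbarGap s q k := Set.Icc_subset_Ioo hx.1 hy.2
  have hterm (z : ℝ) (hz : z ∉ lbarGap s q k) : (y - z)⁻¹ < (x - z)⁻¹ :=
    inv_lt_inv_of_zero_notMem_Icc (by linarith) fun h =>
      hz (hI ⟨by linarith [h.1], by linarith [h.2]⟩)
  simpa [lbarLogDeriv] using add_lt_add_of_lt_of_le (hterm 0 (zero_notMem_lbarGap hpos hs q hk))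
    (sum_le_sum fun j hj => (hterm (s j) (node_notMem_lbarGap hpos hs hq hj hk)).le)

end Gap

theorem lbarLogDeriv_eq_add {p q : ℕ} (hp : p ∈ Finset.Icc 1 n) (hq : q ∈ Finset.Icc 1 n)
    (hpq : p ≠ q) (x : ℝ) :
    lbarLogDeriv n s q x = lbarLogDeriv n s p x + (x - s p)⁻¹ - (x - s q)⁻¹ := by
  unfold lbarLogDeriv
  rw [← add_sum_erase _ _ (mem_erase.2 ⟨hpq, hp⟩),
    ← add_sum_erase _ _ (mem_erase.2 ⟨hpq.symm, hq⟩), erase_right_comm]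
  ring

section CriticalPoints

variable (hpos : ∀ i ∈ Finset.Icc 1 n, 0 < s i) (hs : StrictMonoOn s (Set.Icc 1 n))
  {q : ℕ} (hq : q ∈ Finset.Icc 1 n) {w : ℕ → ℝ} (hw : StrictMonoOn w (Set.Icc 1 (n - 1)))
  (hroot : ∀ x, deriv (Lbar n s q) x = 0 ↔ ∃ k ∈ Finset.Icc 1 (n - 1), x = w k)
include hpos hs hq hw hroot

omit hq in
theorem mem_lbarGap {k : ℕ} (hk : k + 1 ≤ n - 1) : w (k + 1) ∈ lbarGap s q k :=
  critPoint_mem_Ioo_zeros (by unfold Lbar; fun_prop) (lbarNode_strictMonoOn hpos hs q)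
    (fun _ hm => Lbar_lbarNode q hm) hw (fun x hx => (hroot x).1 hx) (by omega)

theorem lbarLogDeriv_eq_zero {k : ℕ} (hk : k + 1 ≤ n - 1) :
    lbarLogDeriv n s q (w (k + 1)) = 0 := by
  have hx := mem_lbarGap hpos hs hw hroot hk
  have hx0 : w (k + 1) ≠ 0 := fun h => zero_notMem_lbarGap hpos hs q hk (h ▸ hx)
  have hxs (j : ℕ) (hj : j ∈ (Finset.Icc 1 n).erase q) : w (k + 1) ≠ s j := fun h =>
    node_notMem_lbarGap hpos hs hq hj hk (h ▸ hx)
  rw [← logDeriv_Lbar hpos hs hq hx0 hxs, logDeriv_apply,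
    (hroot _).2 ⟨k + 1, mem_Icc.2 ⟨by omega, hk⟩, rfl⟩, zero_div]

theorem lt_iff_lbarLogDeriv_neg {k : ℕ} (hk : k + 1 ≤ n - 1) {x : ℝ} (hx : x ∈ lbarGap s q k) :
    w (k + 1) < x ↔ lbarLogDeriv n s q x < 0 := by
  rw [← lbarLogDeriv_eq_zero hpos hs hq hw hroot hk]
  exact (StrictAntiOn.lt_iff_gt (lbarLogDeriv_strictAntiOn hpos hs hq hk) hx
    (mem_lbarGap hpos hs hw hroot hk)).symm

theorem lt_iff_lbarLogDeriv_pos {k : ℕ} (hk : k + 1 ≤ n - 1) {x : ℝ} (hx : x ∈ lbarGap s q k) :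
    x < w (k + 1) ↔ 0 < lbarLogDeriv n s q x := by
  rw [← lbarLogDeriv_eq_zero hpos hs hq hw hroot hk]
  exact (StrictAntiOn.lt_iff_gt (lbarLogDeriv_strictAntiOn hpos hs hq hk)
    (mem_lbarGap hpos hs hw hroot hk) hx).symm

end CriticalPoints

section Interlacing

variable (hpos : ∀ i ∈ Finset.Icc 1 n, 0 < s i) (hs : StrictMonoOn s (Set.Icc 1 n))
  {ω : ℕ → ℕ → ℝ} (hω : ∀ i ∈ Finset.Icc 1 n, StrictMonoOn (ω i) (Set.Icc 1 (n - 1)))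
  (hroot : ∀ i ∈ Finset.Icc 1 n, ∀ x,
    deriv (Lbar n s i) x = 0 ↔ ∃ k ∈ Finset.Icc 1 (n - 1), x = ω i k)
include hpos hs hω hroot

theorem critPoint_lt_of_lt {p q k : ℕ} (hp : p ∈ Finset.Icc 1 n) (hq : q ∈ Finset.Icc 1 n)
    (hpq : p < q) (hk : k + 1 ≤ n - 1) : ω q (k + 1) < ω p (k + 1) := by
  set x := ω p (k + 1)
  have hxp : x ∈ lbarGap s p k := mem_lbarGap hpos hs (hω p hp) (hroot p hp) hk
  by_cases hxq : lbarNode s q (k + 1) ≤ x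
  · exact (mem_lbarGap hpos hs (hω q hq) (hroot q hq) hk).2.trans_le hxq
  replace hxq : x ∈ lbarGap s q k :=
    ⟨(lbarNode_le_of_lt hs hpq (by omega)).trans_lt hxp.1, not_le.1 hxq⟩
  rw [lt_iff_lbarLogDeriv_neg hpos hs hq (hω q hq) (hroot q hq) hk hxq,
    lbarLogDeriv_eq_add hp hq hpq.ne, lbarLogDeriv_eq_zero hpos hs hp (hω p hp) (hroot p hp) hk,
    zero_add, sub_neg]
  simp only [mem_Icc] at hp hq
  refine inv_lt_inv_of_zero_notMem_Icc (by linarith [hs ⟨hp.1, hp.2⟩ ⟨hq.1, hq.2⟩ hpq]) ?_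
  -- otherwise `s p` and `s q` are zeros of `L̄_q` resp. `L̄_p` on opposite sides of `x`,
  -- which would make the `k`-th gaps of `L̄_p` and `L̄_q` disjoint
  rintro ⟨hxsq, hxsp⟩
  have hpk : p ≤ k := (lbarNode_strictMonoOn hpos hs q).le_of_apply_le_of_mem_Ioo
    (by omega) hk hxq (by rw [lbarNode_of_lt (by omega) hpq]; linarith)
  have hkq : k < q - 1 := (lbarNode_strictMonoOn hpos hs p).lt_of_le_apply_of_mem_Ioo
    (by omega) hk hxp
    (by rw [lbarNode_of_le (by omega) (by omega), Nat.sub_add_cancel hq.1]; linarith)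
  have hgap : lbarNode s p k = lbarNode s q (k + 1) := by
    rw [lbarNode_of_le (by omega) hpk, lbarNode_of_lt (by omega) (by omega)]
  exact (hxp.1.trans hxq.2).ne hgap

theorem critPoint_lt_succ {p q k : ℕ} (hp : p ∈ Finset.Icc 1 n) (hq : q ∈ Finset.Icc 1 n)
    (hk : k + 2 ≤ n - 1) : ω p (k + 1) < ω q (k + 2) := by
  rcases eq_or_ne p q with rfl | hpq
  · exact hω p hp ⟨by omega, by omega⟩ ⟨by omega, hk⟩ (by omega)
  set x := ω p (k + 1)
  have hxp : x ∈ lbarGap s p k := mem_lbarGap hpos hs (hω p hp) (hroot p hp) (by omega)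
  by_cases hxq : x ≤ lbarNode s q (k + 1)
  · exact hxq.trans_lt (mem_lbarGap hpos hs (hω q hq) (hroot q hq) hk).1
  replace hxq := not_le.1 hxq
  have hnode : lbarNode s q (k + 1) < lbarNode s p (k + 1) := hxq.trans hxp.2
  rw [lt_iff_lbarLogDeriv_pos hpos hs hq (hω q hq) (hroot q hq) hk
      ⟨hxq, hxp.2.trans_le (lbarNode_le_succ hpos hs p q hk)⟩,
    lbarLogDeriv_eq_add hp hq hpq,
    lbarLogDeriv_eq_zero hpos hs hp (hω p hp) (hroot p hp) (by omega), zero_add, sub_pos]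
  simp only [mem_Icc] at hp hq
  -- the zeros `lbarNode s · (k + 1)` of `L̄_p` and `L̄_q` differ only if `p ≤ k + 1 < q`
  have hpq' : p < q := lt_of_not_ge fun h =>
    (lbarNode_le_of_lt hs (lt_of_le_of_ne h hpq.symm) (by omega)).not_gt hnode
  have hpk : p ≤ k + 1 := le_of_not_gt fun h =>
    hnode.ne (lbarNode_congr (by omega))
  have hkq : k + 1 < q := lt_of_not_ge fun h =>
    hnode.ne (lbarNode_congr (by omega))
  rw [lbarNode_of_lt (by omega) hkq] at hxq
  have hxp2 := hxp.2
  rw [lbarNode_of_le (by omega) hpk] at hxp2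
  have hsp : s p ≤ s (k + 1) := hs.monotoneOn ⟨hp.1, hp.2⟩ ⟨by omega, by omega⟩ hpk
  have hsq : s (k + 1 + 1) ≤ s q := hs.monotoneOn ⟨by omega, by omega⟩ ⟨hq.1, hq.2⟩ (by omega)
  exact (inv_lt_zero.2 (by linarith)).trans (inv_pos.2 (by linarith))

end Interlacing

end Lbar

theorem stmt_9_general (n : ℕ) (s : ℕ → ℝ)
    (hpos : ∀ i ∈ Finset.Icc 1 n, 0 < s i)
    (hmono : ∀ i j, 1 ≤ i → i < j → j ≤ n → s i < s j)
    (ω : ℕ → ℕ → ℝ)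
    (hωmono : ∀ i ∈ Finset.Icc 1 n, ∀ k l, 1 ≤ k → k < l → l ≤ n - 1 → ω i k < ω i l)
    (hωroot : ∀ i ∈ Finset.Icc 1 n, ∀ x : ℝ,
      deriv (Lbar n s i) x = 0 ↔ ∃ k ∈ Finset.Icc 1 (n - 1), x = ω i k) :
    (∀ i ∈ Finset.Icc 1 (n - 1), ∀ k ∈ Finset.Icc 1 (n - 1),
      ω (i + 1) k < ω i k ∧ (k ≤ n - 2 → ω i k < ω (i + 1) (k + 1))) ∧
    (∀ i ∈ Finset.Icc 1 n, ∀ i' ∈ Finset.Icc 1 n,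
      ∀ k ∈ Finset.Icc 1 (n - 1), ∀ k' ∈ Finset.Icc 1 (n - 1),
        (k < k' ∨ (k = k' ∧ i' < i)) → ω i k < ω i' k') := by
  have hs : StrictMonoOn s (Set.Icc 1 n) := fun i hi j hj hij => hmono i j hi.1 hij hj.2
  have hω (i : ℕ) (hi : i ∈ Finset.Icc 1 n) : StrictMonoOn (ω i) (Set.Icc 1 (n - 1)) :=
    fun k hk l hl hkl => hωmono i hi k l hk.1 hkl hl.2
  have hdown {p q k : ℕ} (hp : p ∈ Finset.Icc 1 n) (hq : q ∈ Finset.Icc 1 n) (hpq : p < q)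
      (hk : k ∈ Finset.Icc 1 (n - 1)) : ω q k < ω p k := by
    obtain ⟨k, rfl⟩ : ∃ k', k = k' + 1 := ⟨k - 1, by rw [mem_Icc] at hk; omega⟩
    exact critPoint_lt_of_lt hpos hs hω hωroot hp hq hpq (mem_Icc.1 hk).2
  have hup {p q k : ℕ} (hp : p ∈ Finset.Icc 1 n) (hq : q ∈ Finset.Icc 1 n)
      (hk : k ∈ Finset.Icc 1 (n - 1)) (hk' : k + 1 ≤ n - 1) : ω p k < ω q (k + 1) := by
    obtain ⟨k, rfl⟩ : ∃ k', k = k' + 1 := ⟨k - 1, by rw [mem_Icc] at hk; omega⟩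
    exact critPoint_lt_succ hpos hs hω hωroot hp hq hk'
  refine ⟨fun i hi k hk => ?_, ?_⟩
  · simp only [mem_Icc] at hi
    have hi' : i ∈ Finset.Icc 1 n := mem_Icc.2 ⟨hi.1, by omega⟩
    have hi1 : i + 1 ∈ Finset.Icc 1 n := mem_Icc.2 ⟨by omega, by omega⟩
    refine ⟨hdown hi' hi1 i.lt_succ_self hk, fun hk2 => hup hi' hi1 hk ?_⟩
    rw [mem_Icc] at hk
    omega
  · rintro i hi i' hi' k hk k' hk' (hkk' | ⟨rfl, hii'⟩)
    · simp only [mem_Icc] at hk hk'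
      exact (hup hi hi' (mem_Icc.2 hk) (by omega)).trans_le
        ((hω i' hi').monotoneOn ⟨by omega, by omega⟩ ⟨hk'.1, hk'.2⟩ hkk')
    · exact hdown hi' hi hii' hk

/-- For `n ≥ 2`, nodes `0 < s_1 < ⋯ < s_n`, and `ω_{i,1} < ⋯ < ω_{i,n−1}` the roots of
`L̄_i′`: for each `i` the roots of `L̄_{i+1}′` and `L̄_i′` strictly interlace,
`ω_{i+1,k} < ω_{i,k} < ω_{i+1,k+1}`, and consequently the full chain
`ω_{n,1} < ⋯ < ω_{1,1} < ω_{n,2} < ⋯ < ω_{1,2} < ⋯ < ω_{n,n−1} < ⋯ < ω_{1,n−1}` holds. -/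
theorem stmt_9 (n : ℕ) (hn : 2 ≤ n) (s : ℕ → ℝ)
    (hpos : ∀ i ∈ Finset.Icc 1 n, 0 < s i)
    (hmono : ∀ i j, 1 ≤ i → i < j → j ≤ n → s i < s j)
    (ω : ℕ → ℕ → ℝ)
    (hωmono : ∀ i ∈ Finset.Icc 1 n, ∀ k l, 1 ≤ k → k < l → l ≤ n - 1 → ω i k < ω i l)
    (hωroot : ∀ i ∈ Finset.Icc 1 n, ∀ x : ℝ,
      deriv (Lbar n s i) x = 0 ↔ ∃ k ∈ Finset.Icc 1 (n - 1), x = ω i k) :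
    (∀ i ∈ Finset.Icc 1 (n - 1), ∀ k ∈ Finset.Icc 1 (n - 1),
      ω (i + 1) k < ω i k ∧ (k ≤ n - 2 → ω i k < ω (i + 1) (k + 1))) ∧
    (∀ i ∈ Finset.Icc 1 n, ∀ i' ∈ Finset.Icc 1 n,
      ∀ k ∈ Finset.Icc 1 (n - 1), ∀ k' ∈ Finset.Icc 1 (n - 1),
        (k < k' ∨ (k = k' ∧ i' < i)) → ω i k < ω i' k') :=
  stmt_9_general n s hpos hmono ω hωmono hωroot
end

section
/- Let n ≥ 2 and let 0 < s_1 < s_2 < ⋯ < s_n be real numbers. For each i let ω_{i,1} < ⋯ < ω_{i,n−1} denote the n−1 distinct real roots of L̄_i′, and for j = 1,…,n define the open intervals A_j = (ω_{1,j−1}, ω_{n,j}) with the conventions ω_{1,0} = −∞ and ω_{n,n} = +∞. Then for every j ∈ {1,…,n} and every z ∈ A_j, one has (−1)^{n+j}·(−1)^{n−i}·L̄_i′(z) > 0 for all i ∈ {1,…,n}; in particular, on A_j all the quantities (−1)^{n−i}·L̄_i′(z), i = 1,…,n, are nonzero and have the common sign (−1)^{n+j}. -/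
/-
Write `t 0 = 0 < t 1 = s 1 < ⋯ < t n = s n` and let `p i = ∏_{j ≠ i} (X - t j)` be the nodal
polynomial with the node `t i` removed, so that `L̄_i = p i / (p i).eval (t i)`. The denominator
has sign `(-1)^(n-i)`, and `(p i)' = n ∏_k (X - ω i k)` has sign `(-1)^(n-j)` at every `z` with
`ω i (j-1) < z < ω i j`. Every `z ∈ A_j` is such a point once the critical points are known to
be interlaced: `ω i' k < ω i k` for `i < i'`.

By Rolle and counting, `ω i k` lies in the `k`-th gap between consecutive roots of `p i`. On an
interval free of all nodes, the critical points of `p i` are the zeros of the strictly decreasing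
function `F i z = ∑_{j ≠ i} (z - t j)⁻¹`, and `F i - F i' = (z - t i')⁻¹ - (z - t i)⁻¹ > 0` off
`[t i, t i']`; this pushes the zero of `F i` to the right of the zero of `F i'`.
-/

open Finset

open Polynomial Lagrange

theorem neg_one_pow_card_filter_mul_prod_pos {K ι : Type*} [Field K] [LinearOrder K]
    [IsStrictOrderedRing K] (S : Finset ι) (f : ι → K) {z : K} (hz : ∀ j ∈ S, f j ≠ z) :
    0 < (-1 : K) ^ #{j ∈ S | z < f j} * ∏ j ∈ S, (z - f j) := by
  have hneg : ∏ j ∈ S with z < f j, (z - f j) =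
      (-1) ^ #{j ∈ S | z < f j} * ∏ j ∈ S with z < f j, (f j - z) := by
    rw [← prod_neg]; simp only [neg_sub]
  rw [← prod_filter_mul_prod_filter_not S (fun j => z < f j), hneg, ← mul_assoc, ← mul_assoc,
    ← pow_add, (Even.add_self _).neg_one_pow, one_mul]
  refine mul_pos (prod_pos fun j hj => ?_) (prod_pos fun j hj => ?_)
  · exact sub_pos.2 (mem_filter.1 hj).2
  · obtain ⟨hjS, hle⟩ := mem_filter.1 hj
    exact sub_pos.2 (lt_of_le_of_ne (not_lt.1 hle) (hz j hjS))

theorem sum_inv_sub_lt_sum_inv_sub {K ι : Type*} [Field K] [LinearOrder K] [IsStrictOrderedRing K]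
    {S : Finset ι} (hS : S.Nonempty) {v : ι → K} {x y : K} (hxy : x < y)
    (hv : ∀ j ∈ S, v j ∉ Set.Icc x y) :
    ∑ j ∈ S, (y - v j)⁻¹ < ∑ j ∈ S, (x - v j)⁻¹ := by
  refine sum_lt_sum_of_nonempty hS fun j hj => ?_
  rcases not_and_or.1 (hv j hj) with h | h
  · exact (inv_lt_inv₀ (by linarith) (by linarith)).2 (by linarith)
  · exact (inv_lt_inv_of_neg (by linarith) (by linarith)).2 (by linarith)

theorem StrictMonoOn.eq_self_of_mapsTo {α : Type*} [LinearOrder α] [LocallyFiniteOrder α]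
    {f : α → α} {a b : α} (hf : StrictMonoOn f (Set.Icc a b))
    (hmaps : Set.MapsTo f (Set.Icc a b) (Set.Icc a b)) {k : α} (hk : k ∈ Set.Icc a b) :
    f k = k :=
  congrArg Subtype.val (StrictMono.apply_eq (f := hmaps.restrict) (x := ⟨k, hk⟩)
    fun _ _ h => hf (Subtype.prop _) (Subtype.prop _) h)

theorem Polynomial.eq_C_coeff_mul_nodal {K ι : Type*} [Field K] {S : Finset ι} {v : ι → K}
    {q : K[X]} (hv : Set.InjOn v S) (hdeg : q.natDegree ≤ #S)
    (hroot : ∀ k ∈ S, q.eval (v k) = 0) :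
    q = C (q.coeff #S) * nodal S v := by
  refine eq_of_degree_sub_lt_of_eval_index_eq S hv ?_ fun k hk => ?_
  · rw [degree_lt_iff_coeff_zero]
    intro m hm
    rcases hm.lt_or_eq with hm | rfl
    · rw [coeff_sub, coeff_C_mul, coeff_eq_zero_of_natDegree_lt (hdeg.trans_lt hm),
        coeff_eq_zero_of_natDegree_lt (p := nodal S v) (by rwa [natDegree_nodal]), mul_zero,
        sub_zero]
    · rw [coeff_sub, coeff_C_mul, ← natDegree_nodal (s := S) (v := v),
        nodal_monic.coeff_natDegree, mul_one, sub_self]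
  · rw [hroot k hk, eval_mul, eval_nodal_at_node hk, mul_zero]

theorem Lagrange.eval_derivative_nodal {K ι : Type*} [Field K] [DecidableEq ι] {S : Finset ι}
    {v : ι → K} {z : K} (hz : ∀ j ∈ S, z ≠ v j) :
    (derivative (nodal S v)).eval z = (nodal S v).eval z * ∑ j ∈ S, (z - v j)⁻¹ := by
  rw [derivative_nodal, eval_finsetSum, mul_sum]
  refine sum_congr rfl fun j hj => ?_
  rw [eval_nodal, eval_nodal, ← mul_prod_erase S _ hj, mul_comm (z - v j), mul_assoc,
    mul_inv_cancel₀ (sub_ne_zero.2 (hz j hj)), mul_one]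

theorem Lagrange.eval_derivative_nodal_eq_zero_iff {K ι : Type*} [Field K] [DecidableEq ι]
    {S : Finset ι} {v : ι → K} {z : K} (hz : ∀ j ∈ S, z ≠ v j) :
    (derivative (nodal S v)).eval z = 0 ↔ ∑ j ∈ S, (z - v j)⁻¹ = 0 := by
  rw [eval_derivative_nodal hz, mul_eq_zero, or_iff_right (eval_nodal_not_at_node hz)]

namespace LagrangeCritical

variable {n i : ℕ} {t ω : ℕ → ℝ}

/-- The increasing enumeration of `ℕ ∖ {i}`, like `Fin.succAbove`: the roots of `nodalErase n t i`
in increasing order are `t (succAbove i m)`, `m < n`. -/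
def succAbove (i m : ℕ) : ℕ := if m < i then m else m + 1

theorem succAbove_of_lt {m : ℕ} (h : m < i) : succAbove i m = m := if_pos h

theorem succAbove_of_le {m : ℕ} (h : i ≤ m) : succAbove i m = m + 1 := if_neg (not_lt.2 h)

noncomputable def nodalErase (n : ℕ) (t : ℕ → ℝ) (i : ℕ) : ℝ[X] :=
  nodal ((range (n + 1)).erase i) t

structure IsRootEnum (p : ℝ[X]) (N : ℕ) (ω : ℕ → ℝ) : Prop where
  strictMonoOn : StrictMonoOn ω (Icc 1 N)
  eval_eq_zero_iff : ∀ x, p.eval x = 0 ↔ ∃ k ∈ Icc 1 N, x = ω k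

theorem succAbove_mem_erase (hi : i ∈ Icc 1 n) {m : ℕ} (hm : m ≤ n - 1) :
    succAbove i m ∈ (range (n + 1)).erase i := by
  simp only [mem_Icc] at hi
  simp only [succAbove, mem_erase, mem_range]
  split_ifs <;> omega

theorem strictMonoOn_comp_succAbove (ht : StrictMonoOn t (Set.Iic n)) (hi : i ∈ Icc 1 n) :
    StrictMonoOn (t ∘ succAbove i) (Set.Iic (n - 1)) := by
  intro a ha b hb hab
  have hmem := fun m (hm : m ≤ n - 1) =>
    mem_range_succ_iff.1 (mem_of_mem_erase (succAbove_mem_erase hi hm))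
  exact ht (hmem a ha) (hmem b hb) (by unfold succAbove; split_ifs <;> omega)

theorem apply_le_or_apply_succ_le (ht : StrictMonoOn t (Set.Iic n)) {j l : ℕ} (hj : j ≤ n)
    (hl : l + 1 ≤ n) : t j ≤ t l ∨ t (l + 1) ≤ t j := by
  rcases le_or_gt j l with h | h
  · exact Or.inl (ht.monotoneOn (by simp; omega) (by simp; omega) h)
  · exact Or.inr (ht.monotoneOn (by simp; omega) (by simp; omega) h)

theorem natDegree_nodalErase (hi : i ∈ Icc 1 n) : (nodalErase n t i).natDegree = n := by
  simp only [mem_Icc] at hi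
  rw [nodalErase, natDegree_nodal, card_erase_of_mem (by simp; omega), card_range,
    Nat.add_sub_cancel]

theorem derivative_nodalErase_eq (hi : i ∈ Icc 1 n)
    (hω : IsRootEnum (derivative (nodalErase n t i)) (n - 1) ω) :
    derivative (nodalErase n t i) = C (n : ℝ) * nodal (Icc 1 (n - 1)) ω := by
  have hn : n - 1 + 1 = n := by simp only [mem_Icc] at hi; omega
  have hcard : #(Icc 1 (n - 1)) = n - 1 := by simp
  have hlead : (nodalErase n t i).coeff n = 1 := by
    have := (nodal_monic (R := ℝ) (s := (range (n + 1)).erase i) (v := t)).coeff_natDegree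
    rwa [← nodalErase, natDegree_nodalErase hi] at this
  have hcoeff : (derivative (nodalErase n t i)).coeff (n - 1) = n := by
    rw [coeff_derivative, hn, hlead, one_mul]
    exact_mod_cast hn
  have hdeg : (derivative (nodalErase n t i)).natDegree ≤ #(Icc 1 (n - 1)) :=
    (natDegree_derivative_le _).trans (by rw [natDegree_nodalErase hi, hcard])
  exact (eq_C_coeff_mul_nodal hω.strictMonoOn.injOn hdeg
    fun k hk => (hω.eval_eq_zero_iff _).2 ⟨k, hk, rfl⟩).trans (by rw [hcard, hcoeff])

theorem mem_Ioo_of_isRootEnum (ht : StrictMonoOn t (Set.Iic n)) (hi : i ∈ Icc 1 n)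
    (hω : IsRootEnum (derivative (nodalErase n t i)) (n - 1) ω) {k : ℕ} (hk : k ∈ Icc 1 (n - 1)) :
    ω k ∈ Set.Ioo (t (succAbove i (k - 1))) (t (succAbove i k)) := by
  have hrolle : ∀ k ∈ Icc 1 (n - 1), ∃ m ∈ Icc 1 (n - 1),
      ω m ∈ Set.Ioo (t (succAbove i (k - 1))) (t (succAbove i k)) := by
    intro k hk
    simp only [mem_Icc] at hk
    obtain ⟨c, hc, hdc⟩ := exists_deriv_eq_zero
      (strictMonoOn_comp_succAbove ht hi (by simp; omega) (Set.mem_Iic.2 hk.2)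
        (Nat.sub_one_lt (by omega)))
      (nodalErase n t i).continuous.continuousOn
      (by rw [nodalErase, Function.comp_apply, Function.comp_apply,
        eval_nodal_at_node (succAbove_mem_erase hi (by omega)),
        eval_nodal_at_node (succAbove_mem_erase hi hk.2)])
    rw [Polynomial.deriv, hω.eval_eq_zero_iff] at hdc
    obtain ⟨m, hm, rfl⟩ := hdc
    exact ⟨m, hm, hc⟩
  -- The gaps are ordered, so the chosen indices form a strictly monotone self-map of `[1, n - 1]`.
  choose! m hm hωm using hrolle
  have hmono : StrictMonoOn m (Set.Icc 1 (n - 1)) := by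
    intro k hk k' hk' hkk'
    refine (hω.strictMonoOn.lt_iff_lt (hm k (mem_Icc.2 hk)) (hm k' (mem_Icc.2 hk'))).1 ?_
    refine (hωm k (mem_Icc.2 hk)).2.trans_le (le_trans ?_ (hωm k' (mem_Icc.2 hk')).1.le)
    rw [Set.mem_Icc] at hk hk'
    exact (strictMonoOn_comp_succAbove ht hi).monotoneOn (Set.mem_Iic.2 hk.2)
      (Set.mem_Iic.2 (by omega)) (by omega)
  have hmk : m k = k :=
    hmono.eq_self_of_mapsTo (fun k hk => mem_Icc.1 (hm k (mem_Icc.2 hk))) (mem_Icc.1 hk)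
  simpa only [hmk] using hωm k hk

theorem lt_of_eval_derivative_eq_zero (ht : StrictMonoOn t (Set.Iic n)) (hi : i ∈ Icc 1 n)
    {i' : ℕ} (hi' : i' ∈ Icc 1 n) (hii' : i < i') {a b : ℝ}
    (ha0 : (derivative (nodalErase n t i')).eval a = 0)
    (hb0 : (derivative (nodalErase n t i)).eval b = 0) {l : ℕ} (hl : l + 1 ≤ n)
    (hsep : l + 1 ≤ i ∨ i' ≤ l) (ha : a ∈ Set.Ioo (t l) (t (l + 1)))
    (hb : b ∈ Set.Ioo (t l) (t (l + 1))) : a < b := by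
  simp only [mem_Icc] at hi hi'
  set F := fun (i : ℕ) (z : ℝ) => ∑ j ∈ (range (n + 1)).erase i, (z - t j)⁻¹
  have hgap : ∀ j ∈ range (n + 1), t j ≤ t l ∨ t (l + 1) ≤ t j := fun j hj =>
    apply_le_or_apply_succ_le ht (mem_range_succ_iff.1 hj) hl
  have hF : ∀ i z, z ∈ Set.Ioo (t l) (t (l + 1)) →
      (derivative (nodalErase n t i)).eval z = 0 → F i z = 0 := by
    intro i z hz h
    have hz : ∀ j ∈ (range (n + 1)).erase i, z ≠ t j := fun j hj => by
      rcases hgap j (mem_of_mem_erase hj) with h | h <;> linarith [hz.1, hz.2]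
    exact (eval_derivative_nodal_eq_zero_iff hz).1 h
  have hti : t i < t i' := ht (Set.mem_Iic.2 (by omega)) (Set.mem_Iic.2 hi'.2) hii'
  have hFa : 0 < F i a := by
    have hswap : F i a + (a - t i)⁻¹ = F i' a + (a - t i')⁻¹ := by
      simp only [F]
      rw [sum_erase_add _ _ (by simp; omega), sum_erase_add _ _ (by simp; omega)]
    have hinv : (a - t i)⁻¹ < (a - t i')⁻¹ := by
      rcases hsep with hsep | hsep
      · have : t (l + 1) ≤ t i := ht.monotoneOn (Set.mem_Iic.2 hl) (Set.mem_Iic.2 hi.2) hsep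
        exact (inv_lt_inv_of_neg (by linarith [ha.2]) (by linarith [ha.2])).2 (by linarith)
      · have : t i' ≤ t l := ht.monotoneOn (Set.mem_Iic.2 hi'.2) (Set.mem_Iic.2 (by omega)) hsep
        exact (inv_lt_inv₀ (by linarith [ha.1]) (by linarith [ha.1])).2 (by linarith)
    linarith [hF i' a ha ha0]
  by_contra! hba
  rcases hba.eq_or_lt with rfl | hba
  · linarith [hF i b hb hb0]
  · have : F i a < F i b := sum_inv_sub_lt_sum_inv_sub ⟨0, by simp; omega⟩ hba fun j hj hj' => by
      rcases hgap j (mem_of_mem_erase hj) with h | h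
      · linarith [hb.1, hj'.1]
      · linarith [ha.2, hj'.2]
    linarith [hF i b hb hb0]

theorem lt_of_isRootEnum (ht : StrictMonoOn t (Set.Iic n)) (hi : i ∈ Icc 1 n)
    (hω : IsRootEnum (derivative (nodalErase n t i)) (n - 1) ω) {i' : ℕ} (hi' : i' ∈ Icc 1 n)
    {ω' : ℕ → ℝ} (hω' : IsRootEnum (derivative (nodalErase n t i')) (n - 1) ω') (hii' : i < i')
    {k : ℕ} (hk : k ∈ Icc 1 (n - 1)) : ω' k < ω k := by
  obtain ⟨ha1, ha2⟩ := mem_Ioo_of_isRootEnum ht hi' hω' hk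
  obtain ⟨hb1, hb2⟩ := mem_Ioo_of_isRootEnum ht hi hω hk
  have hcompare := fun l => lt_of_eval_derivative_eq_zero ht hi hi' hii' (l := l)
    ((hω'.eval_eq_zero_iff _).2 ⟨k, hk, rfl⟩) ((hω.eval_eq_zero_iff _).2 ⟨k, hk, rfl⟩)
  simp only [mem_Icc] at hi hi' hk
  -- Unless the node `t k` separates them, both critical points lie in one gap between
  -- consecutive nodes, on one side of `[t i, t i']`.
  rcases le_or_gt (t k) (ω' k) with hak | hak
  · have hik : i' ≤ k := by
      by_contra! h
      rw [succAbove_of_lt h] at ha2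
      linarith
    rw [succAbove_of_le (by omega : i ≤ k - 1), Nat.sub_add_cancel hk.1] at hb1
    rw [succAbove_of_le (by omega : i ≤ k)] at hb2
    rw [succAbove_of_le hik] at ha2
    rcases hak.eq_or_lt with hak | hak
    · exact hak ▸ hb1
    · exact hcompare k (by omega) (Or.inr hik) ⟨hak, ha2⟩ ⟨hb1, hb2⟩
  rcases le_or_gt (t k) (ω k) with hbk | hbk
  · exact hak.trans_le hbk
  have hki : k ≤ i := by
    by_contra! h
    rw [succAbove_of_le (by omega : i ≤ k - 1), Nat.sub_add_cancel hk.1] at hb1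
    linarith
  rw [succAbove_of_lt (by omega : k - 1 < i)] at hb1
  rw [succAbove_of_lt (by omega : k - 1 < i')] at ha1
  have hk1 : k - 1 + 1 = k := Nat.sub_add_cancel hk.1
  exact hcompare (k - 1) (by omega) (Or.inl (by omega)) ⟨ha1, hk1 ▸ hak⟩ ⟨hb1, hk1 ▸ hbk⟩

theorem le_of_isRootEnum (ht : StrictMonoOn t (Set.Iic n)) {ω : ℕ → ℕ → ℝ}
    (hω : ∀ i ∈ Icc 1 n, IsRootEnum (derivative (nodalErase n t i)) (n - 1) (ω i)) {i i' : ℕ}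
    (hi : i ∈ Icc 1 n) (hi' : i' ∈ Icc 1 n) (hii' : i ≤ i') {k : ℕ} (hk : k ∈ Icc 1 (n - 1)) :
    ω i' k ≤ ω i k := by
  rcases hii'.eq_or_lt with rfl | hlt
  · rfl
  · exact (lt_of_isRootEnum ht hi (hω i hi) hi' (hω i' hi') hlt hk).le

theorem neg_one_pow_mul_eval_nodalErase_pos (ht : StrictMonoOn t (Set.Iic n))
    (hi : i ∈ Icc 1 n) : 0 < (-1 : ℝ) ^ (n - i) * (nodalErase n t i).eval (t i) := by
  simp only [mem_Icc] at hi
  have hlt : ∀ j ∈ (range (n + 1)).erase i, (t i < t j ↔ i < j) := fun j hj =>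
    ht.lt_iff_lt (Set.mem_Iic.2 hi.2) (Set.mem_Iic.2 (mem_range_succ_iff.1 (mem_of_mem_erase hj)))
  have hcard : #{j ∈ (range (n + 1)).erase i | t i < t j} = n - i := by
    rw [filter_congr hlt]
    convert Nat.card_Ioc i n using 2
    ext j; simp; omega
  rw [nodalErase, eval_nodal, ← hcard]
  exact neg_one_pow_card_filter_mul_prod_pos _ _ fun j hj h => (mem_erase.1 hj).1 <|
    ht.injOn (Set.mem_Iic.2 (mem_range_succ_iff.1 (mem_of_mem_erase hj))) (Set.mem_Iic.2 hi.2) h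

theorem neg_one_pow_mul_eval_derivative_nodalErase_pos (hi : i ∈ Icc 1 n)
    (hω : IsRootEnum (derivative (nodalErase n t i)) (n - 1) ω) {j : ℕ} (hj : j ∈ Icc 1 n) {z : ℝ}
    (hlo : 1 < j → ω (j - 1) < z) (hhi : j < n → z < ω j) :
    0 < (-1 : ℝ) ^ (n - j) * (derivative (nodalErase n t i)).eval z := by
  simp only [mem_Icc] at hj
  have hbelow : ∀ k ∈ Icc 1 (n - 1), k < j → ω k < z := fun k hk hkj => by
    have := mem_Icc.1 hk
    exact (hω.strictMonoOn.monotoneOn hk (by simp; omega) (by omega)).trans_lt (hlo (by omega))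
  have habove : ∀ k ∈ Icc 1 (n - 1), j ≤ k → z < ω k := fun k hk hjk => by
    have := mem_Icc.1 hk
    exact (hhi (by omega)).trans_le (hω.strictMonoOn.monotoneOn (by simp; omega) hk hjk)
  have hlt : ∀ k ∈ Icc 1 (n - 1), (z < ω k ↔ j ≤ k) := fun k hk =>
    ⟨fun h => not_lt.1 fun hkj => (hbelow k hk hkj).not_gt h, habove k hk⟩
  have hne : ∀ k ∈ Icc 1 (n - 1), ω k ≠ z := fun k hk => by
    rcases lt_or_ge k j with hkj | hkj
    · exact (hbelow k hk hkj).ne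
    · exact (habove k hk hkj).ne'
  have hcard : #{k ∈ Icc 1 (n - 1) | z < ω k} = n - j := by
    rw [filter_congr hlt]
    convert Nat.card_Icc j (n - 1) using 2
    · ext k; simp; omega
    · omega
  rw [derivative_nodalErase_eq hi hω, eval_mul, eval_C, eval_nodal, mul_left_comm, ← hcard]
  exact mul_pos (by simp only [mem_Icc] at hi; exact_mod_cast (by omega : 0 < n))
    (neg_one_pow_card_filter_mul_prod_pos _ _ hne)

theorem strictMonoOn_update_zero {s : ℕ → ℝ} (hpos : ∀ i ∈ Icc 1 n, 0 < s i)
    (hmono : ∀ i j, 1 ≤ i → i < j → j ≤ n → s i < s j) :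
    StrictMonoOn (Function.update s 0 0) (Set.Iic n) := by
  intro a ha b hb hab
  simp only [Set.mem_Iic] at ha hb
  rw [Function.update_of_ne (by omega : b ≠ 0)]
  rcases Nat.eq_zero_or_pos a with rfl | ha0
  · rw [Function.update_self]
    exact hpos b (mem_Icc.2 ⟨by omega, hb⟩)
  · rw [Function.update_of_ne ha0.ne']
    exact hmono a b ha0 hab hb

/-- `L̄_i` is the Lagrange basis polynomial at `s i` for the nodes `0, s 1, …, s n`, which are
encoded as `Function.update s 0 0`. -/
theorem Lbar_eq {s : ℕ → ℝ} (hi : i ∈ Icc 1 n) :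
    Lbar n s i = fun z => (nodalErase n (Function.update s 0 0) i).eval z /
      (nodalErase n (Function.update s 0 0) i).eval (Function.update s 0 0 i) := by
  simp only [mem_Icc] at hi
  have hnodes : (range (n + 1)).erase i = insert 0 ((Icc 1 n).erase i) := by
    ext j; simp only [mem_erase, mem_range, mem_insert, mem_Icc]; omega
  have hzero : (0 : ℕ) ∉ (Icc 1 n).erase i := by simp
  have hs : ∀ z, ∏ j ∈ (Icc 1 n).erase i, (z - Function.update s 0 0 j) =
      ∏ j ∈ (Icc 1 n).erase i, (z - s j) := fun z => prod_congr rfl fun j hj => by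
    rw [Function.update_of_ne (by simp only [mem_erase, mem_Icc] at hj; omega)]
  funext z
  rw [Lbar, nodalErase, eval_nodal, eval_nodal, hnodes, prod_insert hzero, prod_insert hzero, hs,
    hs, Function.update_self, Function.update_of_ne (by omega), sub_zero, sub_zero]

theorem deriv_Lbar {s : ℕ → ℝ} (hi : i ∈ Icc 1 n) (z : ℝ) :
    deriv (Lbar n s i) z = (derivative (nodalErase n (Function.update s 0 0) i)).eval z /
      (nodalErase n (Function.update s 0 0) i).eval (Function.update s 0 0 i) := by
  rw [Lbar_eq hi, deriv_div_const, Polynomial.deriv]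

theorem isRootEnum_of_deriv_Lbar {s : ℕ → ℝ}
    (ht : StrictMonoOn (Function.update s 0 0) (Set.Iic n)) (hi : i ∈ Icc 1 n)
    (hωmono : ∀ k l, 1 ≤ k → k < l → l ≤ n - 1 → ω k < ω l)
    (hωroot : ∀ x, deriv (Lbar n s i) x = 0 ↔ ∃ k ∈ Icc 1 (n - 1), x = ω k) :
    IsRootEnum (derivative (nodalErase n (Function.update s 0 0) i)) (n - 1) ω where
  strictMonoOn k hk l hl hkl := hωmono k l (mem_Icc.1 hk).1 hkl (mem_Icc.1 hl).2
  eval_eq_zero_iff x := by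
    rw [← hωroot, deriv_Lbar hi, div_eq_zero_iff,
      or_iff_left (right_ne_zero_of_mul (neg_one_pow_mul_eval_nodalErase_pos ht hi).ne')]

theorem neg_one_pow_mul_deriv_Lbar_pos {s : ℕ → ℝ}
    (ht : StrictMonoOn (Function.update s 0 0) (Set.Iic n)) (hi : i ∈ Icc 1 n)
    (hω : IsRootEnum (derivative (nodalErase n (Function.update s 0 0) i)) (n - 1) ω) {j : ℕ}
    (hj : j ∈ Icc 1 n) {z : ℝ} (hlo : 1 < j → ω (j - 1) < z) (hhi : j < n → z < ω j) :
    0 < (-1 : ℝ) ^ (n + j) * ((-1 : ℝ) ^ (n - i) * deriv (Lbar n s i) z) := by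
  have hparity : (-1 : ℝ) ^ (n + j) = (-1) ^ (n - j) := by
    rw [mem_Icc] at hj
    rw [show n + j = n - j + 2 * j by omega, pow_add, pow_mul, neg_one_sq, one_pow, mul_one]
  refine (mul_pos (neg_one_pow_mul_eval_derivative_nodalErase_pos hi hω hj hlo hhi)
    (inv_pos.2 (neg_one_pow_mul_eval_nodalErase_pos ht hi))).trans_eq ?_
  rw [deriv_Lbar hi, hparity, mul_inv, ← inv_pow, inv_neg_one]
  ring

end LagrangeCritical

open LagrangeCritical in
theorem stmt_11_general (n : ℕ) (s : ℕ → ℝ)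
    (hpos : ∀ i ∈ Finset.Icc 1 n, 0 < s i)
    (hmono : ∀ i j, 1 ≤ i → i < j → j ≤ n → s i < s j)
    (ω : ℕ → ℕ → ℝ)
    (hωmono : ∀ i ∈ Finset.Icc 1 n, ∀ k l, 1 ≤ k → k < l → l ≤ n - 1 → ω i k < ω i l)
    (hωroot : ∀ i ∈ Finset.Icc 1 n, ∀ x : ℝ,
      deriv (Lbar n s i) x = 0 ↔ ∃ k ∈ Finset.Icc 1 (n - 1), x = ω i k) :
    ∀ j ∈ Finset.Icc 1 n, ∀ z : ℝ,
      (1 < j → ω 1 (j - 1) < z) → (j < n → z < ω n j) →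
      ∀ i ∈ Finset.Icc 1 n,
        0 < (-1 : ℝ) ^ (n + j) * ((-1 : ℝ) ^ (n - i) * deriv (Lbar n s i) z) := by
  intro j hj z hz1 hz2 i hi
  have ht := strictMonoOn_update_zero hpos hmono
  have hω : ∀ i ∈ Icc 1 n,
      IsRootEnum (derivative (nodalErase n (Function.update s 0 0) i)) (n - 1) (ω i) :=
    fun i hi => isRootEnum_of_deriv_Lbar ht hi (hωmono i hi) (hωroot i hi)
  have hi' := mem_Icc.1 hi
  have hj' := mem_Icc.1 hj
  refine neg_one_pow_mul_deriv_Lbar_pos ht hi (hω i hi) hj (fun h => ?_) (fun h => ?_)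
  · exact (le_of_isRootEnum ht hω (by simp; omega) hi hi'.1 (by simp; omega)).trans_lt (hz1 h)
  · exact (hz2 h).trans_le (le_of_isRootEnum ht hω hi (by simp; omega) hi'.2 (by simp; omega))

/-- For `n ≥ 2`, nodes `0 < s_1 < ⋯ < s_n`, roots `ω_{i,1} < ⋯ < ω_{i,n−1}` of `L̄_i′`,
and intervals `A_j = (ω_{1,j−1}, ω_{n,j})` (with `ω_{1,0} = −∞`, `ω_{n,n} = +∞`):
for every `j ∈ {1, …, n}` and every `z ∈ A_j` one has
`(−1)^{n+j} (−1)^{n−i} L̄_i′(z) > 0` for all `i ∈ {1, …, n}`; in particular all the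
quantities `(−1)^{n−i} L̄_i′(z)` are nonzero with common sign `(−1)^{n+j}`. -/
theorem stmt_11 (n : ℕ) (hn : 2 ≤ n) (s : ℕ → ℝ)
    (hpos : ∀ i ∈ Finset.Icc 1 n, 0 < s i)
    (hmono : ∀ i j, 1 ≤ i → i < j → j ≤ n → s i < s j)
    (ω : ℕ → ℕ → ℝ)
    (hωmono : ∀ i ∈ Finset.Icc 1 n, ∀ k l, 1 ≤ k → k < l → l ≤ n - 1 → ω i k < ω i l)
    (hωroot : ∀ i ∈ Finset.Icc 1 n, ∀ x : ℝ,
      deriv (Lbar n s i) x = 0 ↔ ∃ k ∈ Finset.Icc 1 (n - 1), x = ω i k) :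
    ∀ j ∈ Finset.Icc 1 n, ∀ z : ℝ,
      (1 < j → ω 1 (j - 1) < z) → (j < n → z < ω n j) →
      ∀ i ∈ Finset.Icc 1 n,
        0 < (-1 : ℝ) ^ (n + j) * ((-1 : ℝ) ^ (n - i) * deriv (Lbar n s i) z) :=
  stmt_11_general n s hpos hmono ω hωmono hωroot
end

section
/- Let n ≥ 2 and let 0 < s_1 < s_2 < ⋯ < s_n be real numbers. For each i let ω_{i,1} < ⋯ < ω_{i,n−1} denote the n−1 distinct real roots of L̄_i′, and set A_j = (ω_{1,j−1}, ω_{n,j}) for j = 1,…,n with ω_{1,0} = −∞, ω_{n,n} = +∞. Then for a real number z, the n numbers (−1)^{n−i}·L̄_i′(z), i = 1,…,n, are all nonzero and all of the same sign if and only if z ∈ ⋃_{j=1}^n A_j. -/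
open Finset

open Polynomial Lagrange

/-!
Write `L̄_i = Q_i / Q_i(s_i)` with `Q_i = X ∏_{j ≠ i} (X - s_j)` (`lbarNum n s i`). Since
`(-1)^(n-i) Q_i(s_i) > 0`, the sign of `(-1)^(n-i) L̄_i'(z)` is that of `∏_k (z - ω_{i,k})`,
namely `(-1)^(n-1-m)` where `m` is the number of `ω_{i,k}` below `z`.

The heart of the matter is the interlacing `ω_{i',k} < ω_{i,k} < ω_{i',k+1}` for `i < i'`.
Differentiating `Q_i (X - s_i) = Q_{i'} (X - s_{i'})` at `ω = ω_{i,k}` gives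
`Q_{i'}'(ω) (ω - s_{i'})^2 = Q_i(ω) (s_i - s_{i'})`, and by Rolle's theorem exactly `n - k` roots of
`Q_i` lie above `ω_{i,k}`, so `Q_i(ω)` has sign `(-1)^(n-k)`. Hence the number of `ω_{i',l}` below
`ω_{i,k}` has the parity of `k`; being monotone in `k` with values in `[0, n-1]`, it equals `k`.
With this interlacing, the counts `m` agree for all `i` exactly when `z` lies in one of the gaps
`(ω_{1,j-1}, ω_{n,j})`.
-/

theorem prod_sub_eq_neg_one_pow_mul_prod_abs {ι : Type*} (t : Finset ι) (v : ι → ℝ) (x : ℝ) :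
    ∏ k ∈ t, (x - v k) = (-1) ^ #{k ∈ t | x < v k} * ∏ k ∈ t, |x - v k| := by
  have hfactor : ∀ k ∈ t, x - v k = (if x < v k then -1 else 1) * |x - v k| := by
    intro k _
    split_ifs with h
    · rw [abs_of_neg (sub_neg.2 h)]; ring
    · rw [abs_of_nonneg (sub_nonneg.2 (not_lt.1 h)), one_mul]
  rw [prod_congr rfl hfactor, prod_mul_distrib, prod_ite, prod_const, prod_const_one, mul_one]

theorem prod_sub_pos_iff_even {ι : Type*} {t : Finset ι} {v : ι → ℝ} {x : ℝ}
    (hx : ∀ k ∈ t, x ≠ v k) : 0 < ∏ k ∈ t, (x - v k) ↔ Even #{k ∈ t | x < v k} := by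
  have habs : 0 < ∏ k ∈ t, |x - v k| :=
    prod_pos fun k hk => abs_pos.2 (sub_ne_zero.2 (hx k hk))
  rw [prod_sub_eq_neg_one_pow_mul_prod_abs]
  rcases Nat.even_or_odd #{k ∈ t | x < v k} with h | h
  · simp [h.neg_one_pow, habs, h]
  · simp [h.neg_one_pow, habs.le, Nat.not_even_iff_odd.2 h]

theorem StrictMonoOn.lt_iff_le_card_filter {v : ℕ → ℝ} {N : ℕ}
    (hv : StrictMonoOn v (Set.Icc 1 N)) {k : ℕ} (hk : k ∈ Icc 1 N) (x : ℝ) :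
    v k < x ↔ k ≤ #{l ∈ Icc 1 N | v l < x} := by
  rw [mem_Icc] at hk
  constructor
  · intro hkx
    calc k = #(Icc 1 k) := by simp
      _ ≤ _ := card_le_card fun l hl => by
        rw [mem_Icc] at hl
        exact mem_filter.2 ⟨mem_Icc.2 ⟨hl.1, hl.2.trans hk.2⟩,
          (hv.monotoneOn ⟨hl.1, hl.2.trans hk.2⟩ ⟨hk.1, hk.2⟩ hl.2).trans_lt hkx⟩
  · intro hle
    by_contra hxk
    have hsub : {l ∈ Icc 1 N | v l < x} ⊆ Icc 1 (k - 1) := fun l hl => by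
      rw [mem_filter, mem_Icc] at hl
      have : l < k := (hv.lt_iff_lt ⟨hl.1.1, hl.1.2⟩ ⟨hk.1, hk.2⟩).1 (hl.2.trans_le (not_lt.1 hxk))
      exact mem_Icc.2 ⟨hl.1.1, by omega⟩
    have := card_le_card hsub
    simp only [Nat.card_Icc] at this
    omega

theorem card_filter_le_apply_of_injOn {α : Type*} {R : Finset α} {κ : α → ℕ} {N : ℕ}
    (hκ : Set.InjOn κ R) (hle : ∀ ρ ∈ R, κ ρ ≤ N) (hcard : #R = N + 1) (k : ℕ) :
    #{ρ ∈ R | k ≤ κ ρ} = N + 1 - k := by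
  have himage : R.image κ = range (N + 1) := by
    refine eq_of_subset_of_card_le (fun m hm => ?_)
      (by rw [card_range, card_image_of_injOn hκ, hcard])
    obtain ⟨ρ, hρ, rfl⟩ := mem_image.1 hm
    exact mem_range.2 (Nat.lt_succ_of_le (hle ρ hρ))
  have hIco : {m ∈ range (N + 1) | k ≤ m} = Ico k (N + 1) := by
    ext m
    simp only [mem_filter, mem_range, mem_Ico]
    omega
  rw [← card_image_of_injOn (hκ.mono (filter_subset _ _)), ← filter_image, himage, hIco,
    Nat.card_Ico]

theorem MonotoneOn.apply_eq_self_of_mod_two_eq {N : ℕ} {g : ℕ → ℕ}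
    (hg : MonotoneOn g (Set.Icc 1 N)) (hle : ∀ k ∈ Set.Icc 1 N, g k ≤ N)
    (hpar : ∀ k ∈ Set.Icc 1 N, g k % 2 = k % 2) : ∀ k ∈ Set.Icc 1 N, g k = k := by
  have hup : ∀ k, k ∈ Set.Icc 1 N → k ≤ g k := by
    intro k
    induction k with
    | zero => intro h; exact absurd h.1 (by norm_num)
    | succ k ih =>
      intro hk
      rcases Nat.eq_zero_or_pos k with rfl | hk0
      · have := hpar 1 hk; show 1 ≤ g 1; omega
      · have hk' : k ∈ Set.Icc 1 N := ⟨hk0, by have := hk.2; omega⟩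
        have := ih hk'
        have := hg hk' hk (Nat.le_succ k)
        have := hpar k hk'
        have := hpar (k + 1) hk
        omega
  have hdown : ∀ d k, k + d = N → k ∈ Set.Icc 1 N → g k ≤ k := by
    intro d
    induction d with
    | zero => intro k hkN hk; have := hle k hk; omega
    | succ d ih =>
      intro k hkN hk
      have hk' : k + 1 ∈ Set.Icc 1 N := ⟨by omega, by omega⟩
      have := ih (k + 1) (by omega) hk'
      have := hg hk hk' (Nat.le_succ k)
      have := hpar k hk
      have := hpar (k + 1) hk'
      omega
  intro k hk
  have := hup k hk
  have := hdown (N - k) k (by have := hk.2; omega) hk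
  omega

/-- `x` lies strictly between `v m` and `v (m + 1)`, where `v 0 = -∞` and `v (N + 1) = +∞`. -/
def IsGapIndex (v : ℕ → ℝ) (N : ℕ) (x : ℝ) (m : ℕ) : Prop :=
  m ≤ N ∧ ∀ k ∈ Icc 1 N, (k ≤ m → v k < x) ∧ (m < k → x < v k)

namespace IsGapIndex

variable {v : ℕ → ℝ} {N m m' : ℕ} {x y : ℝ}

theorem ne (h : IsGapIndex v N x m) {k : ℕ} (hk : k ∈ Icc 1 N) : x ≠ v k := by
  rcases le_or_gt k m with hkm | hkm
  · exact ((h.2 k hk).1 hkm).ne'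
  · exact ((h.2 k hk).2 hkm).ne

theorem le (hx : IsGapIndex v N x m) (hy : IsGapIndex v N y m') (hxy : x ≤ y) : m ≤ m' := by
  by_contra! hlt
  have := hx.1
  have hk : m' + 1 ∈ Icc 1 N := mem_Icc.2 ⟨by omega, by omega⟩
  have := (hx.2 _ hk).1 (by omega)
  have := (hy.2 _ hk).2 (by omega)
  linarith

theorem prod_pos_iff (h : IsGapIndex v N x m) :
    0 < ∏ k ∈ Icc 1 N, (x - v k) ↔ Even (N - m) := by
  have habove : {k ∈ Icc 1 N | x < v k} = Ioc m N := by
    ext k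
    simp only [mem_filter, mem_Icc, mem_Ioc]
    constructor
    · rintro ⟨hk, hxk⟩
      refine ⟨?_, hk.2⟩
      by_contra! hkm
      exact absurd ((h.2 k (mem_Icc.2 hk)).1 hkm) (not_lt.2 hxk.le)
    · rintro ⟨hmk, hkN⟩
      exact ⟨⟨by omega, hkN⟩, (h.2 k (mem_Icc.2 ⟨by omega, hkN⟩)).2 hmk⟩
  rw [prod_sub_pos_iff_even fun k hk => h.ne hk, habove, Nat.card_Ioc]

end IsGapIndex

theorem exists_isGapIndex {v : ℕ → ℝ} {N : ℕ} (hv : StrictMonoOn v (Set.Icc 1 N)) {x : ℝ}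
    (hx : ∀ k ∈ Icc 1 N, x ≠ v k) : ∃ m, IsGapIndex v N x m := by
  refine ⟨#{l ∈ Icc 1 N | v l < x}, (card_filter_le _ _).trans (by simp), fun k hk => ⟨?_, ?_⟩⟩
  · exact (hv.lt_iff_le_card_filter hk x).2
  · intro hlt
    have := mt (hv.lt_iff_le_card_filter hk x).1 (not_le.2 hlt)
    exact lt_of_le_of_ne (not_lt.1 this) (hx k hk)

theorem eval_nodal_ne_zero_of_eval_derivative_eq_zero {R ι : Type*} [CommRing R] [IsDomain R]
    [DecidableEq ι] {s : Finset ι} {v : ι → R} (hv : Set.InjOn v s) {x : R}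
    (hx : (nodal s v).derivative.eval x = 0) : (nodal s v).eval x ≠ 0 := by
  rw [eval_nodal, prod_ne_zero_iff]
  rintro i hi hxi
  rw [sub_eq_zero] at hxi
  subst hxi
  rw [eval_nodal_derivative_eval_node_eq hi] at hx
  exact eval_nodal_not_at_node (fun j hj => hv.ne hi (mem_of_mem_erase hj)
    (ne_of_mem_erase hj).symm) hx

theorem eval_derivative_mul_sq_eq {R : Type*} [CommRing R] {p q : R[X]} {a b x : R}
    (h : p * (X - C a) = q * (X - C b)) (hx : p.derivative.eval x = 0) :
    q.derivative.eval x * (x - b) ^ 2 = p.eval x * (a - b) := by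
  have h0 := congrArg (eval x) h
  have h1 := congrArg (fun r => eval x (derivative r)) h
  simp only [derivative_mul, derivative_sub, derivative_X, derivative_C, eval_mul, eval_add,
    eval_sub, eval_X, eval_C, sub_zero, mul_one, hx, zero_mul, zero_add] at h0 h1
  linear_combination (-(x - b)) * h1 + h0

theorem eval_derivative_pos_iff_of_mul_X_sub_C_eq {p q : ℝ[X]} {a b x : ℝ}
    (h : p * (X - C a) = q * (X - C b)) (hab : a < b) (hx : p.derivative.eval x = 0)
    (hpx : p.eval x ≠ 0) : q.derivative.eval x ≠ 0 ∧ (0 < q.derivative.eval x ↔ p.eval x < 0) := by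
  have hkey := eval_derivative_mul_sq_eq h hx
  have hrhs : p.eval x * (a - b) ≠ 0 := mul_ne_zero hpx (sub_ne_zero.2 hab.ne)
  rw [← hkey] at hrhs
  have hsq : 0 < (x - b) ^ 2 := by
    have := right_ne_zero_of_mul hrhs
    positivity
  refine ⟨left_ne_zero_of_mul hrhs, ?_⟩
  rw [← mul_pos_iff_of_pos_right hsq, hkey, ← neg_mul_neg,
    mul_pos_iff_of_pos_right (neg_pos.2 (sub_neg.2 hab)), neg_pos]

structure IsOrderedRoots (p : ℝ[X]) (N : ℕ) (v : ℕ → ℝ) : Prop where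
  strictMonoOn : StrictMonoOn v (Set.Icc 1 N)
  eval_eq_zero_iff : ∀ x, p.eval x = 0 ↔ ∃ k ∈ Icc 1 N, x = v k

namespace IsOrderedRoots

variable {p : ℝ[X]} {N : ℕ} {v : ℕ → ℝ}

theorem eq_C_leadingCoeff_mul_nodal (h : IsOrderedRoots p N v) (hp : p ≠ 0)
    (hdeg : p.natDegree = N) : p = C p.leadingCoeff * nodal (Icc 1 N) v := by
  have hinj : Set.InjOn v (Icc 1 N : Finset ℕ) := by
    rw [coe_Icc]; exact h.strictMonoOn.injOn
  refine eq_of_degree_le_of_eval_index_eq _ hinj ?_ ?_ ?_ fun k hk => ?_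
  · rw [degree_eq_natDegree hp, hdeg, Nat.card_Icc]; simp
  · rw [degree_C_mul (leadingCoeff_ne_zero.2 hp), degree_nodal, degree_eq_natDegree hp, hdeg,
      Nat.card_Icc]; simp
  · simp [(nodal_monic).leadingCoeff]
  · rw [(h.eval_eq_zero_iff _).2 ⟨k, hk, rfl⟩, eval_mul, eval_nodal_at_node hk, mul_zero]

theorem card_filter_lt_of_derivative (h : IsOrderedRoots p.derivative N v) {R : Finset ℝ}
    (hR : ∀ ρ ∈ R, p.eval ρ = 0) (hcard : #R = N + 1) {k : ℕ} (hk : k ∈ Icc 1 N) :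
    #{ρ ∈ R | v k < ρ} = N + 1 - k := by
  set κ : ℝ → ℕ := fun ρ => #{l ∈ Icc 1 N | v l < ρ}
  have hlt : ∀ ρ, ∀ l ∈ Icc 1 N, v l < ρ ↔ l ≤ κ ρ := fun ρ l hl =>
    h.strictMonoOn.lt_iff_le_card_filter hl ρ
  have hκ : StrictMonoOn κ R := by
    intro ρ hρ ρ' hρ' hρρ'
    obtain ⟨c, hc, hc0⟩ := exists_deriv_eq_zero hρρ' p.continuousOn
      ((hR ρ hρ).trans (hR ρ' hρ').symm)
    rw [Polynomial.deriv] at hc0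
    obtain ⟨l, hl, rfl⟩ := (h.eval_eq_zero_iff _).1 hc0
    have := (hlt ρ' l hl).1 hc.2
    have := mt (hlt ρ l hl).2 (not_lt.2 hc.1.le)
    omega
  rw [filter_congr fun ρ _ => hlt ρ k hk]
  exact card_filter_le_apply_of_injOn hκ.injOn
    (fun ρ _ => (card_filter_le _ _).trans (by simp)) hcard k

theorem eval_nodal_pos_iff {R : Finset ℝ} (hcard : #R = N + 1)
    (h : IsOrderedRoots (nodal R id).derivative N v) {k : ℕ} (hk : k ∈ Icc 1 N) :
    0 < (nodal R id).eval (v k) ↔ Even (N + 1 - k) := by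
  have hne := eval_nodal_ne_zero_of_eval_derivative_eq_zero (Set.injOn_id _)
    ((h.eval_eq_zero_iff _).2 ⟨k, hk, rfl⟩)
  rw [eval_nodal, prod_ne_zero_iff] at hne
  rw [eval_nodal, prod_sub_pos_iff_even fun ρ hρ => sub_ne_zero.1 (hne ρ hρ)]
  simp only [id_eq]
  rw [h.card_filter_lt_of_derivative (fun ρ hρ => eval_nodal_at_node (v := id) hρ) hcard hk]

end IsOrderedRoots

section interlacing

variable {n : ℕ} {ω : ℕ → ℕ → ℝ}

theorem le_and_le_of_isGapIndex
    (hgap : ∀ i ∈ Icc 1 n, ∀ i' ∈ Icc 1 n, i < i' → ∀ k ∈ Icc 1 (n - 1),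
      IsGapIndex (ω i') (n - 1) (ω i k) k)
    {i : ℕ} (hi : i ∈ Icc 1 n) {k : ℕ} (hk : k ∈ Icc 1 (n - 1)) :
    ω n k ≤ ω i k ∧ ω i k ≤ ω 1 k := by
  have h1 : 1 ∈ Icc 1 n := mem_Icc.2 ⟨le_rfl, (mem_Icc.1 hi).1.trans (mem_Icc.1 hi).2⟩
  have hn : n ∈ Icc 1 n := mem_Icc.2 ⟨(mem_Icc.1 hi).1.trans (mem_Icc.1 hi).2, le_rfl⟩
  constructor
  · rcases (mem_Icc.1 hi).2.lt_or_eq with hin | rfl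
    · exact (((hgap i hi n hn hin k hk).2 k hk).1 le_rfl).le
    · exact le_rfl
  · rcases (mem_Icc.1 hi).1.lt_or_eq with h1i | rfl
    · exact (((hgap 1 h1 i hi h1i k hk).2 k hk).1 le_rfl).le
    · exact le_rfl

theorem isGapIndex_of_lt_of_lt (h1 : StrictMonoOn (ω 1) (Set.Icc 1 (n - 1)))
    (hn : StrictMonoOn (ω n) (Set.Icc 1 (n - 1)))
    (hgap : ∀ i ∈ Icc 1 n, ∀ i' ∈ Icc 1 n, i < i' → ∀ k ∈ Icc 1 (n - 1),
      IsGapIndex (ω i') (n - 1) (ω i k) k)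
    {j : ℕ} (hj : j ∈ Icc 1 n) {z : ℝ} (hlow : 1 < j → ω 1 (j - 1) < z)
    (hhigh : j < n → z < ω n j) {i : ℕ} (hi : i ∈ Icc 1 n) :
    IsGapIndex (ω i) (n - 1) z (j - 1) := by
  have hj' := mem_Icc.1 hj
  refine ⟨by omega, fun k hk => ⟨fun hkj => ?_, fun hjk => ?_⟩⟩
  · have hk' := mem_Icc.1 hk
    calc ω i k ≤ ω 1 k := (le_and_le_of_isGapIndex hgap hi hk).2
      _ ≤ ω 1 (j - 1) := h1.monotoneOn ⟨hk'.1, hk'.2⟩ ⟨by omega, by omega⟩ hkj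
      _ < z := hlow (by omega)
  · have hk' := mem_Icc.1 hk
    calc z < ω n j := hhigh (by omega)
      _ ≤ ω n k := hn.monotoneOn ⟨by omega, by omega⟩ ⟨hk'.1, hk'.2⟩ (by omega)
      _ ≤ ω i k := (le_and_le_of_isGapIndex hgap hi hk).1

theorem eq_of_isGapIndex_of_even_iff (hn1 : 1 ≤ n)
    (hgap : ∀ i ∈ Icc 1 n, ∀ i' ∈ Icc 1 n, i < i' → ∀ k ∈ Icc 1 (n - 1),
      IsGapIndex (ω i') (n - 1) (ω i k) k)
    {z : ℝ} {m₁ m : ℕ} (hm₁ : IsGapIndex (ω 1) (n - 1) z m₁) (hm : IsGapIndex (ω n) (n - 1) z m)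
    (hpar : Even (n - 1 - m₁) ↔ Even (n - 1 - m)) : m₁ = m := by
  have h1mem : 1 ∈ Icc 1 n := mem_Icc.2 ⟨le_rfl, hn1⟩
  have hnmem : n ∈ Icc 1 n := mem_Icc.2 ⟨hn1, le_rfl⟩
  have := hm₁.1
  have := hm.1
  have hle : m₁ ≤ m := by
    by_contra! hlt
    have hk : m + 1 ∈ Icc 1 (n - 1) := mem_Icc.2 ⟨by omega, by omega⟩
    have := (hm₁.2 _ hk).1 (by omega)
    have := (hm.2 _ hk).2 (by omega)
    have := (le_and_le_of_isGapIndex hgap h1mem hk).1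
    linarith
  have hle' : m ≤ m₁ + 1 := by
    by_contra! hlt
    have hk : m₁ + 1 ∈ Icc 1 (n - 1) := mem_Icc.2 ⟨by omega, by omega⟩
    have hk' : m₁ + 2 ∈ Icc 1 (n - 1) := mem_Icc.2 ⟨by omega, by omega⟩
    have := (hm₁.2 _ hk).2 (by omega)
    have := (hm.2 _ hk').1 (by omega)
    have := ((hgap 1 h1mem n hnmem (by omega) _ hk).2 _ hk').2 (by omega)
    linarith
  rw [Nat.even_iff, Nat.even_iff] at hpar
  omega

theorem forall_prod_pos_or_forall_prod_neg_iff (hn1 : 1 ≤ n)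
    (h1 : StrictMonoOn (ω 1) (Set.Icc 1 (n - 1))) (hn : StrictMonoOn (ω n) (Set.Icc 1 (n - 1)))
    (hgap : ∀ i ∈ Icc 1 n, ∀ i' ∈ Icc 1 n, i < i' → ∀ k ∈ Icc 1 (n - 1),
      IsGapIndex (ω i') (n - 1) (ω i k) k) (z : ℝ) :
    ((∀ i ∈ Icc 1 n, 0 < ∏ k ∈ Icc 1 (n - 1), (z - ω i k)) ∨
      (∀ i ∈ Icc 1 n, ∏ k ∈ Icc 1 (n - 1), (z - ω i k) < 0)) ↔
    ∃ j ∈ Icc 1 n, (1 < j → ω 1 (j - 1) < z) ∧ (j < n → z < ω n j) := by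
  have h1mem : 1 ∈ Icc 1 n := mem_Icc.2 ⟨le_rfl, hn1⟩
  have hnmem : n ∈ Icc 1 n := mem_Icc.2 ⟨hn1, le_rfl⟩
  constructor
  · intro hsame
    have hne : ∀ i ∈ Icc 1 n, ∀ k ∈ Icc 1 (n - 1), z ≠ ω i k := by
      intro i hi k hk
      have hP : ∏ k ∈ Icc 1 (n - 1), (z - ω i k) ≠ 0 := by
        rcases hsame with h | h
        exacts [(h i hi).ne', (h i hi).ne]
      exact sub_ne_zero.1 (prod_ne_zero_iff.1 hP k hk)
    obtain ⟨m₁, hm₁⟩ := exists_isGapIndex h1 (hne 1 h1mem)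
    obtain ⟨m, hm⟩ := exists_isGapIndex hn (hne n hnmem)
    have hpar : Even (n - 1 - m₁) ↔ Even (n - 1 - m) := by
      rw [← hm₁.prod_pos_iff, ← hm.prod_pos_iff]
      rcases hsame with h | h
      · exact iff_of_true (h 1 h1mem) (h n hnmem)
      · exact iff_of_false (h 1 h1mem).asymm (h n hnmem).asymm
    obtain rfl := eq_of_isGapIndex_of_even_iff hn1 hgap hm₁ hm hpar
    have := hm.1
    refine ⟨m₁ + 1, mem_Icc.2 ⟨by omega, by omega⟩, fun hj => ?_, fun hj => ?_⟩
    · exact (hm₁.2 _ (mem_Icc.2 ⟨by omega, hm₁.1⟩)).1 (by omega)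
    · exact (hm.2 _ (mem_Icc.2 ⟨by omega, by omega⟩)).2 (by omega)
  · rintro ⟨j, hj, hlow, hhigh⟩
    have hgapz : ∀ i ∈ Icc 1 n, IsGapIndex (ω i) (n - 1) z (j - 1) := fun i hi =>
      isGapIndex_of_lt_of_lt h1 hn hgap hj hlow hhigh hi
    rcases Nat.even_or_odd (n - 1 - (j - 1)) with he | ho
    · exact Or.inl fun i hi => (hgapz i hi).prod_pos_iff.2 he
    · refine Or.inr fun i hi => lt_of_le_of_ne (not_lt.1 fun hpos => ?_) ?_
      · exact Nat.not_even_iff_odd.2 ho ((hgapz i hi).prod_pos_iff.1 hpos)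
      · exact prod_ne_zero_iff.2 fun k hk => sub_ne_zero.2 ((hgapz i hi).ne hk)

end interlacing

noncomputable def lbarNum (n : ℕ) (s : ℕ → ℝ) (i : ℕ) : ℝ[X] :=
  X * nodal ((Icc 1 n).erase i) s

theorem Lbar_eq_eval_lbarNum (n : ℕ) (s : ℕ → ℝ) (i : ℕ) :
    Lbar n s i = fun z => (lbarNum n s i).eval z / (lbarNum n s i).eval (s i) := by
  funext z
  simp [Lbar, lbarNum, eval_nodal]

theorem deriv_Lbar (n : ℕ) (s : ℕ → ℝ) (i : ℕ) (z : ℝ) :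
    deriv (Lbar n s i) z = (lbarNum n s i).derivative.eval z / (lbarNum n s i).eval (s i) := by
  rw [Lbar_eq_eval_lbarNum, deriv_div_const, Polynomial.deriv]

theorem lbarNum_mul_X_sub_C {n : ℕ} (s : ℕ → ℝ) {i : ℕ} (hi : i ∈ Icc 1 n) :
    lbarNum n s i * (X - C (s i)) = X * nodal (Icc 1 n) s := by
  rw [lbarNum, nodal_eq_mul_nodal_erase hi]
  ring

theorem natDegree_lbarNum {n : ℕ} (s : ℕ → ℝ) {i : ℕ} (hi : i ∈ Icc 1 n) :
    (lbarNum n s i).natDegree = n := by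
  rw [lbarNum, natDegree_mul X_ne_zero nodal_ne_zero, natDegree_X, natDegree_nodal,
    card_erase_of_mem hi, Nat.card_Icc]
  have := mem_Icc.1 hi
  omega

theorem derivative_lbarNum_eq {n : ℕ} {s : ℕ → ℝ} {i : ℕ} (hi : i ∈ Icc 1 n) {v : ℕ → ℝ}
    (h : IsOrderedRoots (lbarNum n s i).derivative (n - 1) v) :
    (lbarNum n s i).derivative = C (n : ℝ) * nodal (Icc 1 (n - 1)) v := by
  have hmonic : (lbarNum n s i).Monic := monic_X.mul nodal_monic
  have hdeg := natDegree_lbarNum s hi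
  have hn : n ≠ 0 := by have := mem_Icc.1 hi; omega
  have hlead : (lbarNum n s i).derivative.leadingCoeff = n := by
    rw [leadingCoeff_derivative, hmonic.leadingCoeff, hdeg, one_mul]
  have hne : (lbarNum n s i).derivative ≠ 0 := derivative_ne_zero.2 (by rw [hdeg]; exact hn)
  have hdeg' : (lbarNum n s i).derivative.natDegree = n - 1 := by rw [natDegree_derivative, hdeg]
  rw [← hlead]
  exact h.eq_C_leadingCoeff_mul_nodal hne hdeg'

section nodes

variable {n : ℕ} {s : ℕ → ℝ}

theorem exists_card_eq_lbarNum_eq_nodal (hpos : ∀ j ∈ Icc 1 n, 0 < s j)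
    (hs : StrictMonoOn s (Set.Icc 1 n)) {i : ℕ} (hi : i ∈ Icc 1 n) :
    ∃ R : Finset ℝ, #R = n ∧ lbarNum n s i = nodal R id := by
  have hinj : Set.InjOn s ((Icc 1 n).erase i : Finset ℕ) :=
    hs.injOn.mono fun j hj => by simpa using mem_of_mem_erase hj
  have h0 : (0 : ℝ) ∉ ((Icc 1 n).erase i).image s := fun h0 => by
    obtain ⟨j, hj, hj0⟩ := mem_image.1 h0
    exact (hpos j (mem_of_mem_erase hj)).ne' hj0
  refine ⟨insert 0 (((Icc 1 n).erase i).image s), ?_, ?_⟩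
  · rw [card_insert_of_notMem h0, card_image_of_injOn hinj, card_erase_of_mem hi, Nat.card_Icc]
    have := mem_Icc.1 hi
    omega
  · rw [nodal_insert_eq_nodal h0, lbarNum, nodal, nodal, prod_image hinj]
    simp

theorem neg_one_pow_mul_eval_lbarNum_pos (hpos : ∀ j ∈ Icc 1 n, 0 < s j)
    (hs : StrictMonoOn s (Set.Icc 1 n)) {i : ℕ} (hi : i ∈ Icc 1 n) :
    0 < (-1) ^ (n - i) * (lbarNum n s i).eval (s i) := by
  have habove : {j ∈ (Icc 1 n).erase i | s i < s j} = Ioc i n := by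
    ext j
    simp only [mem_filter, mem_erase, mem_Icc, mem_Ioc]
    have := mem_Icc.1 hi
    constructor
    · rintro ⟨⟨-, hj⟩, hij⟩
      exact ⟨(hs.lt_iff_lt ⟨this.1, this.2⟩ ⟨hj.1, hj.2⟩).1 hij, hj.2⟩
    · rintro ⟨hij, hjn⟩
      exact ⟨⟨hij.ne', by omega, hjn⟩, hs ⟨this.1, this.2⟩ ⟨by omega, hjn⟩ hij⟩
  have habs : 0 < ∏ j ∈ (Icc 1 n).erase i, |s i - s j| :=
    prod_pos fun j hj => abs_pos.2 <| sub_ne_zero.2 <| hs.injOn.ne (by simpa using hi)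
      (by simpa using mem_of_mem_erase hj) (ne_of_mem_erase hj).symm
  have hsq : ((-1 : ℝ) ^ (n - i)) ^ 2 = 1 := by rw [pow_right_comm]; simp
  simp only [lbarNum, eval_mul, eval_X, eval_nodal]
  rw [prod_sub_eq_neg_one_pow_mul_prod_abs, habove, Nat.card_Ioc]
  calc 0 < s i * ∏ j ∈ (Icc 1 n).erase i, |s i - s j| := mul_pos (hpos i hi) habs
    _ = _ := by linear_combination (-(s i * ∏ j ∈ (Icc 1 n).erase i, |s i - s j|)) * hsq

theorem isOrderedRoots_derivative_lbarNum (hpos : ∀ j ∈ Icc 1 n, 0 < s j)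
    (hs : StrictMonoOn s (Set.Icc 1 n)) {i : ℕ} (hi : i ∈ Icc 1 n) {v : ℕ → ℝ}
    (hv : StrictMonoOn v (Set.Icc 1 (n - 1)))
    (hroot : ∀ x, deriv (Lbar n s i) x = 0 ↔ ∃ k ∈ Icc 1 (n - 1), x = v k) :
    IsOrderedRoots (lbarNum n s i).derivative (n - 1) v := by
  refine ⟨hv, fun x => ?_⟩
  have hden : (lbarNum n s i).eval (s i) ≠ 0 :=
    right_ne_zero_of_mul (neg_one_pow_mul_eval_lbarNum_pos hpos hs hi).ne'
  rw [← hroot, deriv_Lbar, div_eq_zero_iff, or_iff_left hden]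

theorem neg_one_pow_mul_deriv_Lbar_eq (hpos : ∀ j ∈ Icc 1 n, 0 < s j)
    (hs : StrictMonoOn s (Set.Icc 1 n)) {i : ℕ} (hi : i ∈ Icc 1 n) {v : ℕ → ℝ}
    (h : IsOrderedRoots (lbarNum n s i).derivative (n - 1) v) (z : ℝ) :
    ∃ c > 0, (-1 : ℝ) ^ (n - i) * deriv (Lbar n s i) z = c * ∏ k ∈ Icc 1 (n - 1), (z - v k) := by
  have hden := neg_one_pow_mul_eval_lbarNum_pos hpos hs hi
  have hn : (0 : ℝ) < n := by have := mem_Icc.1 hi; exact_mod_cast (by omega : 0 < n)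
  refine ⟨n * ((-1) ^ (n - i) / (lbarNum n s i).eval (s i)),
    mul_pos hn (div_pos_iff.2 (mul_pos_iff.1 hden)), ?_⟩
  rw [deriv_Lbar, derivative_lbarNum_eq hi h, eval_mul, eval_C, eval_nodal]
  ring

theorem exists_isGapIndex_mod_two_eq (hpos : ∀ j ∈ Icc 1 n, 0 < s j)
    (hs : StrictMonoOn s (Set.Icc 1 n)) {i i' : ℕ} (hi : i ∈ Icc 1 n) (hi' : i' ∈ Icc 1 n)
    (hii' : i < i') {v v' : ℕ → ℝ} (h : IsOrderedRoots (lbarNum n s i).derivative (n - 1) v)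
    (h' : IsOrderedRoots (lbarNum n s i').derivative (n - 1) v') {k : ℕ}
    (hk : k ∈ Icc 1 (n - 1)) : ∃ m, IsGapIndex v' (n - 1) (v k) m ∧ m % 2 = k % 2 := by
  obtain ⟨R, hR, hnodal⟩ := exists_card_eq_lbarNum_eq_nodal hpos hs hi
  have hcrit : (lbarNum n s i).derivative.eval (v k) = 0 := (h.eval_eq_zero_iff _).2 ⟨k, hk, rfl⟩
  have hval : (lbarNum n s i).eval (v k) ≠ 0 := by
    rw [hnodal] at hcrit ⊢
    exact eval_nodal_ne_zero_of_eval_derivative_eq_zero (Set.injOn_id _) hcrit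
  have hsign : 0 < (lbarNum n s i).eval (v k) ↔ Even (n - 1 + 1 - k) := by
    rw [hnodal] at h ⊢
    exact h.eval_nodal_pos_iff (by have := mem_Icc.1 hi; omega) hk
  obtain ⟨hval', hsign'⟩ := eval_derivative_pos_iff_of_mul_X_sub_C_eq
    ((lbarNum_mul_X_sub_C s hi).trans (lbarNum_mul_X_sub_C s hi').symm)
    (hs ⟨(mem_Icc.1 hi).1, (mem_Icc.1 hi).2⟩ ⟨(mem_Icc.1 hi').1, (mem_Icc.1 hi').2⟩ hii')
    hcrit hval
  have hn : (0 : ℝ) < n := by have := mem_Icc.1 hi; exact_mod_cast (by omega : 0 < n)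
  rw [derivative_lbarNum_eq hi' h', eval_mul, eval_C, eval_nodal] at hval' hsign'
  rw [mul_pos_iff_of_pos_left hn] at hsign'
  obtain ⟨m, hm⟩ := exists_isGapIndex h'.strictMonoOn fun l hl =>
    sub_ne_zero.1 (prod_ne_zero_iff.1 (right_ne_zero_of_mul hval') l hl)
  refine ⟨m, hm, ?_⟩
  have hneg : (lbarNum n s i).eval (v k) < 0 ↔ ¬ 0 < (lbarNum n s i).eval (v k) :=
    ⟨fun hlt => hlt.asymm, fun hnlt => lt_of_le_of_ne (not_lt.1 hnlt) hval⟩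
  rw [hm.prod_pos_iff, hneg, hsign, Nat.even_iff, Nat.even_iff] at hsign'
  have := hm.1
  have := mem_Icc.1 hk
  omega

theorem isGapIndex_of_lt (hpos : ∀ j ∈ Icc 1 n, 0 < s j)
    (hs : StrictMonoOn s (Set.Icc 1 n)) {i i' : ℕ} (hi : i ∈ Icc 1 n) (hi' : i' ∈ Icc 1 n)
    (hii' : i < i') {v v' : ℕ → ℝ} (h : IsOrderedRoots (lbarNum n s i).derivative (n - 1) v)
    (h' : IsOrderedRoots (lbarNum n s i').derivative (n - 1) v') {k : ℕ}
    (hk : k ∈ Icc 1 (n - 1)) : IsGapIndex v' (n - 1) (v k) k := by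
  choose! g hg hpar using fun k (hk : k ∈ Icc 1 (n - 1)) =>
    exists_isGapIndex_mod_two_eq hpos hs hi hi' hii' h h' hk
  have hgk := MonotoneOn.apply_eq_self_of_mod_two_eq
    (fun k hk l hl hkl => (hg k (mem_Icc.2 hk)).le (hg l (mem_Icc.2 hl))
      (h.strictMonoOn.monotoneOn hk hl hkl))
    (fun k hk => (hg k (mem_Icc.2 hk)).1) (fun k hk => hpar k (mem_Icc.2 hk))
  have := hg k hk
  rwa [hgk k (mem_Icc.1 hk)] at this

end nodes

/-- For `n ≥ 2`, nodes `0 < s_1 < ⋯ < s_n`, roots `ω_{i,1} < ⋯ < ω_{i,n−1}` of `L̄_i′`,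
and intervals `A_j = (ω_{1,j−1}, ω_{n,j})` (with `ω_{1,0} = −∞`, `ω_{n,n} = +∞`):
the `n` numbers `(−1)^{n−i} L̄_i′(z)`, `i = 1, …, n`, are all nonzero and of the same
sign if and only if `z ∈ ⋃_{j=1}^n A_j`. -/
theorem stmt_12 (n : ℕ) (hn : 2 ≤ n) (s : ℕ → ℝ)
    (hpos : ∀ i ∈ Finset.Icc 1 n, 0 < s i)
    (hmono : ∀ i j, 1 ≤ i → i < j → j ≤ n → s i < s j)
    (ω : ℕ → ℕ → ℝ)
    (hωmono : ∀ i ∈ Finset.Icc 1 n, ∀ k l, 1 ≤ k → k < l → l ≤ n - 1 → ω i k < ω i l)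
    (hωroot : ∀ i ∈ Finset.Icc 1 n, ∀ x : ℝ,
      deriv (Lbar n s i) x = 0 ↔ ∃ k ∈ Finset.Icc 1 (n - 1), x = ω i k)
    (z : ℝ) :
    ((∀ i ∈ Finset.Icc 1 n, 0 < (-1 : ℝ) ^ (n - i) * deriv (Lbar n s i) z) ∨
     (∀ i ∈ Finset.Icc 1 n, (-1 : ℝ) ^ (n - i) * deriv (Lbar n s i) z < 0)) ↔
    (∃ j ∈ Finset.Icc 1 n, (1 < j → ω 1 (j - 1) < z) ∧ (j < n → z < ω n j)) := by
  have hs : StrictMonoOn s (Set.Icc 1 n) := fun i hi j hj hij => hmono i j hi.1 hij hj.2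
  have hroots : ∀ i ∈ Icc 1 n, IsOrderedRoots (lbarNum n s i).derivative (n - 1) (ω i) :=
    fun i hi => isOrderedRoots_derivative_lbarNum hpos hs hi
      (fun k hk l hl hkl => hωmono i hi k l hk.1 hkl hl.2) (hωroot i hi)
  have hsign : ∀ i ∈ Icc 1 n, ∃ c > 0,
      (-1 : ℝ) ^ (n - i) * deriv (Lbar n s i) z = c * ∏ k ∈ Icc 1 (n - 1), (z - ω i k) :=
    fun i hi => neg_one_pow_mul_deriv_Lbar_eq hpos hs hi (hroots i hi) z
  have h1 : 1 ∈ Icc 1 n := mem_Icc.2 ⟨le_rfl, by omega⟩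
  have hnn : n ∈ Icc 1 n := mem_Icc.2 ⟨by omega, le_rfl⟩
  rw [← forall_prod_pos_or_forall_prod_neg_iff (by omega) (hroots 1 h1).strictMonoOn
    (hroots n hnn).strictMonoOn
    (fun i hi i' hi' hii' k hk => isGapIndex_of_lt hpos hs hi hi' hii' (hroots i hi)
      (hroots i' hi') hk) z]
  refine or_congr (forall₂_congr fun i hi => ?_) (forall₂_congr fun i hi => ?_) <;>
    obtain ⟨c, hc, heq⟩ := hsign i hi <;> rw [heq]
  · exact mul_pos_iff_of_pos_left hc
  · rw [← neg_pos, ← mul_neg, mul_pos_iff_of_pos_left hc, neg_pos]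
end

section
/- Let n ≥ 1, a > 0, c ∈ ℝⁿ, and let ξ* be a design with support points x_1,…,x_m ∈ [0,a] and weights ω_1,…,ω_m. Suppose there exist p ∈ ℝⁿ and h ∈ ℝ with |pᵀf(x)| ≤ 1 for all x ∈ [0,a], |pᵀf(x_i)| = 1 for i = 1,…,m, and c = h·Σ_{i=1}^m ω_i·(pᵀf(x_i))·f(x_i). Then for every design η on [0,a] and every v ∈ ℝⁿ with M(η)v = c, one has cᵀv ≥ h²; moreover there exists v* ∈ ℝⁿ with M(ξ*)v* = c and cᵀv* = h². In particular ξ* is c-optimal with optimal value h². -/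
/-!
Elfving's argument. The three conditions say that `c = M(ξ*) (h p)` and `pᵀ M(ξ*) p = 1`,
hence `pᵀ c = h`. For any design `η` and any `v` with `M(η) v = c`, Cauchy–Schwarz for the
positive semidefinite form `M(η)` gives `h² = (pᵀ M(η) v)² ≤ (pᵀ M(η) p) (vᵀ M(η) v) ≤ cᵀ v`,
since `|pᵀ f| ≤ 1` on `[0, a]` forces `pᵀ M(η) p ≤ 1`. The vector `v* = h p` attains `h²`.
-/

open Finset Matrix

/-- The regression vector `f(x) = (x, x², …, xⁿ)ᵀ` of the degree-`n` polynomial model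
without intercept. -/
def modelVec (n : ℕ) (x : ℝ) : Fin n → ℝ := fun i => x ^ (i.1 + 1)

/-- An approximate design on `[0, a]`: a probability measure with finite support
`x_1, …, x_m ⊆ [0, a]` and weights `ω_1, …, ω_m`. -/
structure Design (n : ℕ) (a : ℝ) where
  m : ℕ
  pts : Fin m → ℝ
  wts : Fin m → ℝ
  pts_mem : ∀ i, pts i ∈ Set.Icc (0 : ℝ) a
  wts_nonneg : ∀ i, 0 ≤ wts i
  wts_sum : ∑ i, wts i = 1

/-- The information matrix `M(ξ) = Σᵢ ωᵢ f(xᵢ) f(xᵢ)ᵀ` of a design. -/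
noncomputable def infoMatrix {n : ℕ} {a : ℝ} (ξ : Design n a) :
    Matrix (Fin n) (Fin n) ℝ :=
  ∑ i, ξ.wts i • Matrix.vecMulVec (modelVec n (ξ.pts i)) (modelVec n (ξ.pts i))

section InformationMatrix

variable {n : ℕ} {a : ℝ}

theorem infoMatrix_mulVec (ξ : Design n a) (v : Fin n → ℝ) :
    infoMatrix ξ *ᵥ v = ∑ i, (ξ.wts i * (modelVec n (ξ.pts i) ⬝ᵥ v)) • modelVec n (ξ.pts i) := by
  simp only [infoMatrix, sum_mulVec, smul_mulVec, vecMulVec_mulVec, op_smul_eq_smul, smul_smul]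

theorem dotProduct_infoMatrix_mulVec (ξ : Design n a) (u v : Fin n → ℝ) :
    u ⬝ᵥ infoMatrix ξ *ᵥ v =
      ∑ i, ξ.wts i * ((u ⬝ᵥ modelVec n (ξ.pts i)) * (modelVec n (ξ.pts i) ⬝ᵥ v)) := by
  simp only [infoMatrix_mulVec, dotProduct_sum, dotProduct_smul, smul_eq_mul]
  exact sum_congr rfl fun i _ => by ring

theorem dotProduct_infoMatrix_mulVec_self (ξ : Design n a) (v : Fin n → ℝ) :
    v ⬝ᵥ infoMatrix ξ *ᵥ v = ∑ i, ξ.wts i * (v ⬝ᵥ modelVec n (ξ.pts i)) ^ 2 := by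
  simp only [dotProduct_infoMatrix_mulVec, dotProduct_comm (modelVec n _) v, sq]

theorem dotProduct_infoMatrix_mulVec_self_nonneg (ξ : Design n a) (v : Fin n → ℝ) :
    0 ≤ v ⬝ᵥ infoMatrix ξ *ᵥ v := by
  rw [dotProduct_infoMatrix_mulVec_self]
  exact sum_nonneg fun i _ => mul_nonneg (ξ.wts_nonneg i) (sq_nonneg _)

theorem sq_dotProduct_infoMatrix_mulVec_le (ξ : Design n a) (u v : Fin n → ℝ) :
    (u ⬝ᵥ infoMatrix ξ *ᵥ v) ^ 2 ≤ (u ⬝ᵥ infoMatrix ξ *ᵥ u) * (v ⬝ᵥ infoMatrix ξ *ᵥ v) := by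
  rw [dotProduct_infoMatrix_mulVec, dotProduct_infoMatrix_mulVec_self,
    dotProduct_infoMatrix_mulVec_self]
  refine sum_sq_le_sum_mul_sum_of_sq_le_mul _
    (fun i _ => mul_nonneg (ξ.wts_nonneg i) (sq_nonneg _))
    (fun i _ => mul_nonneg (ξ.wts_nonneg i) (sq_nonneg _)) fun i _ => le_of_eq ?_
  rw [dotProduct_comm (modelVec n _) v]
  ring

theorem dotProduct_infoMatrix_mulVec_self_le_one (η : Design n a) {p : Fin n → ℝ}
    (hp : ∀ x ∈ Set.Icc (0 : ℝ) a, |p ⬝ᵥ modelVec n x| ≤ 1) :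
    p ⬝ᵥ infoMatrix η *ᵥ p ≤ 1 := by
  rw [dotProduct_infoMatrix_mulVec_self, ← η.wts_sum]
  refine sum_le_sum fun i _ => mul_le_of_le_one_right (η.wts_nonneg i) ?_
  rw [← sq_abs]
  exact pow_le_one₀ (abs_nonneg _) (hp _ (η.pts_mem i))

theorem dotProduct_infoMatrix_mulVec_self_eq_one (ξ : Design n a) {p : Fin n → ℝ}
    (hp : ∀ i, |p ⬝ᵥ modelVec n (ξ.pts i)| = 1) :
    p ⬝ᵥ infoMatrix ξ *ᵥ p = 1 := by
  have hsq (i : Fin ξ.m) : (p ⬝ᵥ modelVec n (ξ.pts i)) ^ 2 = 1 := by rw [← sq_abs, hp, one_pow]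
  simp only [dotProduct_infoMatrix_mulVec_self, hsq, mul_one, ξ.wts_sum]

end InformationMatrix

theorem stmt_14_general (n : ℕ) (a : ℝ) (c : Fin n → ℝ)
    (ξ : Design n a) (p : Fin n → ℝ) (h : ℝ)
    (h1 : ∀ x ∈ Set.Icc (0 : ℝ) a, |p ⬝ᵥ modelVec n x| ≤ 1)
    (h2 : ∀ i, |p ⬝ᵥ modelVec n (ξ.pts i)| = 1)
    (h3 : c = h • ∑ i, (ξ.wts i * (p ⬝ᵥ modelVec n (ξ.pts i))) • modelVec n (ξ.pts i)) :
    (∀ (η : Design n a) (v : Fin n → ℝ),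
      (infoMatrix η).mulVec v = c → h ^ 2 ≤ c ⬝ᵥ v) ∧
    (∃ v : Fin n → ℝ, (infoMatrix ξ).mulVec v = c ∧ c ⬝ᵥ v = h ^ 2) := by
  have hc : infoMatrix ξ *ᵥ (h • p) = c := by
    simp only [h3, mulVec_smul, infoMatrix_mulVec, dotProduct_comm (modelVec n _) p]
  have hpc : p ⬝ᵥ c = h := by
    rw [← hc, mulVec_smul, dotProduct_smul, dotProduct_infoMatrix_mulVec_self_eq_one ξ h2,
      smul_eq_mul, mul_one]
  refine ⟨fun η v hv => ?_, h • p, hc, ?_⟩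
  · calc h ^ 2 = (p ⬝ᵥ infoMatrix η *ᵥ v) ^ 2 := by rw [hv, hpc]
      _ ≤ (p ⬝ᵥ infoMatrix η *ᵥ p) * (v ⬝ᵥ infoMatrix η *ᵥ v) :=
        sq_dotProduct_infoMatrix_mulVec_le η p v
      _ ≤ 1 * (v ⬝ᵥ infoMatrix η *ᵥ v) :=
        mul_le_mul_of_nonneg_right (dotProduct_infoMatrix_mulVec_self_le_one η h1)
          (dotProduct_infoMatrix_mulVec_self_nonneg η v)
      _ = c ⬝ᵥ v := by rw [one_mul, hv, dotProduct_comm]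
  · rw [dotProduct_smul, dotProduct_comm, hpc, smul_eq_mul, sq]

/-- **Sufficiency part of the Elfving criterion with explicit bound.** If `p` and `h`
satisfy the three Elfving conditions for `ξ*`, then every design `η` with `M(η)v = c`
satisfies `cᵀv ≥ h²`, and `ξ*` attains this value; in particular `ξ*` is `c`-optimal
with optimal value `h²`. -/
theorem stmt_14 (n : ℕ) (hn : 1 ≤ n) (a : ℝ) (ha : 0 < a) (c : Fin n → ℝ)
    (ξ : Design n a) (p : Fin n → ℝ) (h : ℝ)
    (h1 : ∀ x ∈ Set.Icc (0 : ℝ) a, |p ⬝ᵥ modelVec n x| ≤ 1)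
    (h2 : ∀ i, |p ⬝ᵥ modelVec n (ξ.pts i)| = 1)
    (h3 : c = h • ∑ i, (ξ.wts i * (p ⬝ᵥ modelVec n (ξ.pts i))) • modelVec n (ξ.pts i)) :
    (∀ (η : Design n a) (v : Fin n → ℝ),
      (infoMatrix η).mulVec v = c → h ^ 2 ≤ c ⬝ᵥ v) ∧
    (∃ v : Fin n → ℝ, (infoMatrix ξ).mulVec v = c ∧ c ⬝ᵥ v = h ^ 2) :=
  stmt_14_general n a c ξ p h h1 h2 h3
end
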